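/- arXiv:2301.13584 — 8 statements merged into one kernel-verified Lean document; each statement's English description precedes it below -/
import Mathlib

section
/- Let F(x) = (1/2)‖Ax − y‖₂². Fix, for each X ∈ ℝⁿ, a set largest_k(X) ⊆ {1,…,n} with |largest_k(X)| = k such that |X_i| ≥ |X_j| whenever i ∈ largest_k(X) and j ∉ largest_k(X), and fix H(X) as a minimizer of F over {x ∈ ℝⁿ : x_i = 0 for all i ∉ largest_k(X)}. Then: (1) for any minimizer X* of the function X ↦ F(H(X)) over ℝⁿ, the vector H(X*) minimizes F over the set of vectors with at most k nonzero entries; (2) conversely, any minimizer x' of F over the set of vectors with at most k nonzero entries is a minimizer of X ↦ F(H(X)) over ℝⁿ. -/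
noncomputable section
open Finset Matrix

/-- Support of a vector as a finite set of indices. -/
def spt {d : ℕ} (x : Fin d → ℝ) : Finset (Fin d) :=
  Finset.univ.filter (fun i => x i ≠ 0)

/-- Euclidean (ℓ²) norm of a vector. -/
def l2norm {d : ℕ} (v : Fin d → ℝ) : ℝ :=
  Real.sqrt (∑ i, (v i) ^ 2)

/-- Sup (ℓ∞) norm of a vector. -/
def supNorm {d : ℕ} (v : Fin d → ℝ) : ℝ :=
  ⨆ i, |v i|

/-- Problem equivalence: minimizers of `X ↦ F(H(X))` give minimizers of `F` over
`k`-sparse vectors, and conversely. -/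
theorem sea_problem_equivalence {m n k : ℕ} (hm : 0 < m) (hn : 0 < n) (hk : 0 < k)
    (hkn : k ≤ n)
    (A : Matrix (Fin m) (Fin n) ℝ) (y : Fin m → ℝ)
    (F : (Fin n → ℝ) → ℝ)
    (hF : ∀ x, F x = (1 / 2) * (l2norm (A.mulVec x - y)) ^ 2)
    (largestk : (Fin n → ℝ) → Finset (Fin n))
    (hcard : ∀ X, (largestk X).card = k)
    (hsel : ∀ X, ∀ i ∈ largestk X, ∀ j, j ∉ largestk X → |X j| ≤ |X i|)
    (H : (Fin n → ℝ) → (Fin n → ℝ))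
    (hHsupp : ∀ X, ∀ i, i ∉ largestk X → H X i = 0)
    (hHmin : ∀ X, ∀ z : Fin n → ℝ, (∀ i, i ∉ largestk X → z i = 0) → F (H X) ≤ F z) :
    (∀ Xstar : Fin n → ℝ, (∀ X, F (H Xstar) ≤ F (H X)) →
      (spt (H Xstar)).card ≤ k ∧ ∀ z : Fin n → ℝ, (spt z).card ≤ k → F (H Xstar) ≤ F z) ∧
    (∀ x' : Fin n → ℝ, (spt x').card ≤ k → (∀ z : Fin n → ℝ, (spt z).card ≤ k → F x' ≤ F z) →
      ∀ X : Fin n → ℝ, F (H x') ≤ F (H X)) := by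
  -- key: if z is k-sparse, then z vanishes off largestk z
  have key : ∀ z : Fin n → ℝ, (spt z).card ≤ k → ∀ i, i ∉ largestk z → z i = 0 := by
    intro z hz i hi
    by_contra hzi
    -- spt z is not a subset of largestk z, look at cardinalities
    have hsub : ¬ spt z ⊆ largestk z := fun h => hi (h (by simp [spt, hzi]))
    -- there is j ∈ largestk z with z j = 0
    have hlt : ((largestk z) ∩ spt z).card < k := by
      rcases Finset.not_subset.mp hsub with ⟨a, ha, hna⟩
      have : (largestk z) ∩ spt z ⊂ spt z := by
        refine Finset.ssubset_iff_of_subset (Finset.inter_subset_right) |>.mpr ⟨a, ha, ?_⟩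
        simp [Finset.mem_inter, hna]
      exact lt_of_lt_of_le (Finset.card_lt_card this) hz
    have : ∃ j ∈ largestk z, z j = 0 := by
      by_contra hcon
      push_neg at hcon
      have : largestk z ⊆ (largestk z) ∩ spt z := by
        intro j hj
        exact Finset.mem_inter.mpr ⟨hj, by simp [spt, hcon j hj]⟩
      have := Finset.card_le_card this
      have hc := hcard z
      omega
      -- (card largestk z = k contradicts hlt)
    rcases this with ⟨j, hj, hzj⟩
    have := hsel z j hj i hi
    rw [hzj] at this
    simp at this
    exact hzi this
  have sparse_min : ∀ z : Fin n → ℝ, (spt z).card ≤ k → F (H z) ≤ F z :=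
    fun z hz => hHmin z z (key z hz)
  have Hsparse : ∀ X : Fin n → ℝ, (spt (H X)).card ≤ k := by
    intro X
    have hsub : spt (H X) ⊆ largestk X := by
      intro i hi
      by_contra h
      exact (Finset.mem_filter.mp hi).2 (hHsupp X i h)
    calc (spt (H X)).card ≤ (largestk X).card := Finset.card_le_card hsub
      _ = k := hcard X
  constructor
  · intro Xstar hXstar
    refine ⟨Hsparse Xstar, fun z hz => le_trans (hXstar z) (sparse_min z hz)⟩
  · intro x' hx' hmin X
    exact le_trans (sparse_min x' hx') (hmin (H X) (Hsparse X))

end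
end

section
/- For every oracle trajectory (S^t)_{t≥0}, (X^t)_{t≥0} with step size η > 0 and initialization X⁰ ∈ ℝⁿ, there exists t_s ≤ k·(1 + 2‖X⁰‖_∞ / (η · min_{i∈S*} |x*_i|)) such that S* ⊆ S^{t_s}. -/
noncomputable section
open Finset Matrix

/-- An oracle trajectory with step size `η > 0` and initialization `X0`. -/
structure OracleTraj {n : ℕ} (k : ℕ) (xstar : Fin n → ℝ) (η : ℝ) (X0 : Fin n → ℝ) where
  S : ℕ → Finset (Fin n)
  X : ℕ → Fin n → ℝ
  X_init : X 0 = X0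
  card_S : ∀ t, (S t).card = k
  sel : ∀ t, ∀ i ∈ S t, ∀ j, j ∉ S t → |X t j| ≤ |X t i|
  upd : ∀ t i, X (t + 1) i = if xstar i ≠ 0 ∧ i ∉ S t then X t i + η * xstar i else X t i

/-- Recovery with the Oracle Update Rule: the true support is visited within
`k (1 + 2‖X⁰‖_∞ / (η min_{i∈S*}|x*_i|))` iterations. -/
theorem oracle_recovery {n k : ℕ} (hk : 0 < k) (hkn : k ≤ n)
    (xstar : Fin n → ℝ) (hspars : (spt xstar).card ≤ k) (hne : (spt xstar).Nonempty)
    (η : ℝ) (hη : 0 < η) (X0 : Fin n → ℝ)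
    (traj : OracleTraj k xstar η X0) :
    ∃ ts : ℕ,
      (ts : ℝ) ≤ (k : ℝ) *
        (1 + 2 * supNorm X0 / (η * (spt xstar).inf' hne (fun i => |xstar i|))) ∧
      spt xstar ⊆ traj.S ts := by
  classical
  set M := supNorm X0 with hMdef
  set m := (spt xstar).inf' hne (fun i => |xstar i|) with hmdef
  have hn : 0 < n := lt_of_lt_of_le hk hkn
  have hnonempty : Nonempty (Fin n) := ⟨⟨0, hn⟩⟩
  have hXle : ∀ j, |X0 j| ≤ M := by
    intro j
    show |X0 j| ≤ ⨆ i, |X0 i|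
    exact le_ciSup (Set.Finite.bddAbove (Set.finite_range (fun i : Fin n => |X0 i|))) j
  have hM0 : 0 ≤ M := le_trans (abs_nonneg (X0 ⟨0, hn⟩)) (hXle ⟨0, hn⟩)
  have hmpos : 0 < m := by
    rw [hmdef, Finset.lt_inf'_iff]
    intro i hi
    have : xstar i ≠ 0 := by simpa [spt] using hi
    exact abs_pos.mpr this
  have hmle : ∀ i ∈ spt xstar, m ≤ |xstar i| := fun i hi => Finset.inf'_le _ hi
  -- update counter
  set c : Fin n → ℕ → ℕ :=
    fun i t => ((Finset.range t).filter (fun s => i ∉ traj.S s)).card with hcdef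
  -- Lemma A: evolution on the support
  have hA : ∀ t i, xstar i ≠ 0 → traj.X t i = X0 i + (c i t : ℝ) * η * xstar i := by
    intro t
    induction t with
    | zero => intro i hi; simp [hcdef, traj.X_init]
    | succ t ih =>
      intro i hi
      rw [traj.upd]
      by_cases hmem : i ∈ traj.S t
      · rw [if_neg (by tauto), ih i hi]
        have hc : c i (t+1) = c i t := by
          simp only [hcdef, Finset.range_add_one, Finset.filter_insert]
          rw [if_neg (by simpa using hmem)]
        rw [hc]
      · rw [if_pos ⟨hi, hmem⟩, ih i hi]
        have hc : c i (t+1) = c i t + 1 := by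
          simp only [hcdef, Finset.range_add_one, Finset.filter_insert]
          rw [if_pos (by simpa using hmem),
            Finset.card_insert_of_notMem (by simp)]
        rw [hc]; push_cast; ring
  -- Lemma B: off-support coordinates never change
  have hB : ∀ t j, xstar j = 0 → traj.X t j = X0 j := by
    intro t
    induction t with
    | zero => intro j _; rw [traj.X_init]
    | succ t ih =>
      intro j hj
      rw [traj.upd, if_neg (by simp [hj])]
      exact ih j hj
  -- Lemma C: non-selected coordinates are bounded by M
  have hC : ∀ t i, i ∉ traj.S t → |traj.X t i| ≤ M := by
    intro t i hi
    by_cases hiS : i ∈ spt xstar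
    · by_contra h
      push_neg at h
      have hsub : traj.S t ⊆ spt xstar := by
        intro j hj
        by_contra hj'
        have hj0 : xstar j = 0 := by simpa [spt] using hj'
        have h1 : |traj.X t j| ≤ M := by rw [hB t j hj0]; exact hXle j
        have h2 : |traj.X t i| ≤ |traj.X t j| := traj.sel t j hj i hi
        linarith
      have heq : traj.S t = spt xstar :=
        Finset.eq_of_subset_of_card_le hsub (hspars.trans (traj.card_S t).ge)
      exact hi (heq ▸ hiS)
    · have hj0 : xstar i = 0 := by simpa [spt] using hiS
      rw [hB t i hj0]; exact hXle i
  -- Lemma D: counter bound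
  have hD : ∀ i ∈ spt xstar, ∀ t, (c i t : ℝ) ≤ 2 * M / (η * m) + 1 := by
    intro i hi t
    have hxi : xstar i ≠ 0 := by simpa [spt] using hi
    induction t with
    | zero =>
      simp only [hcdef, Finset.range_zero, Finset.filter_empty, Finset.card_empty,
        Nat.cast_zero]
      positivity
    | succ t ih =>
      by_cases hmem : i ∈ traj.S t
      · have hc : c i (t+1) = c i t := by
          simp only [hcdef, Finset.range_add_one, Finset.filter_insert]
          rw [if_neg (by simpa using hmem)]
        rw [hc]; exact ih
      · have hc : c i (t+1) = c i t + 1 := by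
          simp only [hcdef, Finset.range_add_one, Finset.filter_insert]
          rw [if_pos (by simpa using hmem),
            Finset.card_insert_of_notMem (by simp)]
        have hXb : |traj.X t i| ≤ M := hC t i hmem
        rw [hA t i hxi] at hXb
        have habs : (c i t : ℝ) * (η * |xstar i|) ≤ 2 * M := by
          have h1 : |(c i t : ℝ) * η * xstar i| ≤ |X0 i + (c i t : ℝ) * η * xstar i| + |X0 i| := by
            have := abs_sub_abs_le_abs_sub ((c i t : ℝ) * η * xstar i + X0 i) (X0 i)
            have h2 := abs_add_le ((c i t : ℝ) * η * xstar i) (X0 i)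
            calc |(c i t : ℝ) * η * xstar i|
                = |X0 i + (c i t : ℝ) * η * xstar i - X0 i| := by ring_nf
              _ ≤ |X0 i + (c i t : ℝ) * η * xstar i| + |X0 i| := by
                  exact (abs_sub _ _).trans (by simp)
          have h3 : |(c i t : ℝ) * η * xstar i| = (c i t : ℝ) * (η * |xstar i|) := by
            rw [abs_mul, abs_mul, Nat.abs_cast, abs_of_pos hη]; ring
          have h4 := hXle i
          linarith [h1, h3 ▸ h1]
        have hcle : (c i t : ℝ) ≤ 2 * M / (η * m) := by
          have hpos : 0 < η * |xstar i| := by positivity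
          have h5 : (c i t : ℝ) ≤ 2 * M / (η * |xstar i|) := (le_div_iff₀ hpos).mpr habs
          have h6 : 2 * M / (η * |xstar i|) ≤ 2 * M / (η * m) := by
            gcongr <;>
              first
                | linarith [hmle i hi]
                | exact mul_pos hη hmpos
                | nlinarith [hmle i hi, hη.le, hmpos]
          linarith
        rw [hc]; push_cast; linarith
  -- sum upper bound
  have hsum_le : ∀ t, (∑ i ∈ spt xstar, (c i t : ℝ)) ≤ (k : ℝ) * (1 + 2 * M / (η * m)) := by
    intro t
    calc ∑ i ∈ spt xstar, (c i t : ℝ)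
        ≤ ∑ _i ∈ spt xstar, (2 * M / (η * m) + 1) :=
          Finset.sum_le_sum (fun i hi => hD i hi t)
      _ = (spt xstar).card * (2 * M / (η * m) + 1) := by
          rw [Finset.sum_const, nsmul_eq_mul]
      _ ≤ (k : ℝ) * (1 + 2 * M / (η * m)) := by
          have h1 : ((spt xstar).card : ℝ) ≤ (k : ℝ) := Nat.cast_le.mpr hspars
          have h2 : 0 ≤ 2 * M / (η * m) + 1 := by positivity
          nlinarith
  -- sum lower bound
  have hsum_ge : ∀ t, (∀ s, s < t → ¬ spt xstar ⊆ traj.S s) →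
      (t : ℝ) ≤ ∑ i ∈ spt xstar, (c i t : ℝ) := by
    intro t ht
    have key : t ≤ ∑ i ∈ spt xstar, c i t := by
      have hswap : ∑ i ∈ spt xstar, c i t
          = ∑ s ∈ Finset.range t, ((spt xstar).filter (fun i => i ∉ traj.S s)).card := by
        simp only [hcdef, Finset.card_filter]
        rw [Finset.sum_comm]
      rw [hswap]
      calc t = ∑ _s ∈ Finset.range t, 1 := by simp
        _ ≤ ∑ s ∈ Finset.range t, ((spt xstar).filter (fun i => i ∉ traj.S s)).card := by
            apply Finset.sum_le_sum
            intro s hs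
            have hns := ht s (Finset.mem_range.mp hs)
            obtain ⟨i, hi, hni⟩ := Finset.not_subset.mp hns
            exact Finset.card_pos.mpr ⟨i, Finset.mem_filter.mpr ⟨hi, hni⟩⟩
    calc (t : ℝ) ≤ (∑ i ∈ spt xstar, c i t : ℕ) := Nat.cast_le.mpr key
      _ = ∑ i ∈ spt xstar, (c i t : ℝ) := by push_cast; rfl
  -- conclusion
  set B := (k : ℝ) * (1 + 2 * M / (η * m)) with hBdef
  have hB0 : 0 ≤ B := by positivity
  by_contra hcon
  push_neg at hcon
  set t := Nat.floor B + 1 with htdef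
  have hall : ∀ s, s < t → ¬ spt xstar ⊆ traj.S s := by
    intro s hs
    apply hcon
    have hsf : s ≤ Nat.floor B := Nat.lt_succ_iff.mp hs
    calc (s : ℝ) ≤ (Nat.floor B : ℝ) := Nat.cast_le.mpr hsf
      _ ≤ B := Nat.floor_le hB0
  have h1 := hsum_ge t hall
  have h2 := hsum_le t
  have h3 : (t : ℝ) ≤ B := le_trans h1 h2
  have h4 : B < (t : ℝ) := by
    rw [htdef]; push_cast
    exact Nat.lt_floor_add_one B
  linarith

end
end

section
/- For every oracle trajectory, every index i ∈ S* and every t ≥ 1: if c^t_i > 2‖X⁰‖_∞ / (η |x*_i|), then for all t' ≥ t one has i ∈ S^{t'}. -/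
noncomputable section
open Finset Matrix

/-- Counting vector: `c^t_i = #{t' ∈ {0,…,t−1} : i ∈ S* \ S^{t'}}`. -/
def countVec {n : ℕ} (S : ℕ → Finset (Fin n)) (xstar : Fin n → ℝ) (t : ℕ) (i : Fin n) : ℕ :=
  ((Finset.range t).filter (fun t' => xstar i ≠ 0 ∧ i ∉ S t')).card

lemma countVec_succ {n : ℕ} (S : ℕ → Finset (Fin n)) (xstar : Fin n → ℝ) (t : ℕ) (i : Fin n) :
    countVec S xstar (t + 1) i =
      countVec S xstar t i + (if xstar i ≠ 0 ∧ i ∉ S t then 1 else 0) := by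
  unfold countVec
  rw [Finset.range_add_one, Finset.filter_insert]
  split
  · rw [Finset.card_insert_of_notMem (by simp)]
  · simp

lemma countVec_mono {n : ℕ} (S : ℕ → Finset (Fin n)) (xstar : Fin n → ℝ) {t t' : ℕ}
    (h : t ≤ t') (i : Fin n) : countVec S xstar t i ≤ countVec S xstar t' i :=
  Finset.card_le_card (Finset.filter_subset_filter _ (Finset.range_subset_range.2 h))

lemma X_formula {n k : ℕ} {xstar : Fin n → ℝ} {η : ℝ} {X0 : Fin n → ℝ}
    (traj : OracleTraj k xstar η X0) :
    ∀ t i, traj.X t i = X0 i + (countVec traj.S xstar t i) * (η * xstar i) := by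
  intro t
  induction t with
  | zero => intro i; simp [countVec, traj.X_init]
  | succ t ih =>
    intro i
    rw [traj.upd, countVec_succ, ih]
    split
    · push_cast; ring
    · push_cast; ring

lemma abs_le_supNorm {n : ℕ} [NeZero n] (v : Fin n → ℝ) (j : Fin n) : |v j| ≤ supNorm v :=
  by unfold supNorm; exact le_ciSup (Set.Finite.bddAbove (Set.finite_range (fun i => |v i|))) j

/-- If `c^t_i` is large enough, then index `i ∈ S*` stays selected forever after `t`. -/
theorem oracle_counting_stays_selected {n k : ℕ} (hk : 0 < k) (hkn : k ≤ n)
    (xstar : Fin n → ℝ) (hspars : (spt xstar).card ≤ k) (hne : (spt xstar).Nonempty)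
    (η : ℝ) (hη : 0 < η) (X0 : Fin n → ℝ)
    (traj : OracleTraj k xstar η X0)
    (i : Fin n) (hi : i ∈ spt xstar)
    (t : ℕ) (ht : 1 ≤ t)
    (hc : (countVec traj.S xstar t i : ℝ) > 2 * supNorm X0 / (η * |xstar i|)) :
    ∀ t', t ≤ t' → i ∈ traj.S t' := by
  intro t' htt'
  have : NeZero n := ⟨fun h => (h ▸ i).elim0⟩
  have hxi : xstar i ≠ 0 := (Finset.mem_filter.1 hi).2
  have hηx : 0 < η * |xstar i| := mul_pos hη (abs_pos.2 hxi)
  -- counting at t' is at least counting at t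
  have hct' : (countVec traj.S xstar t' i : ℝ) > 2 * supNorm X0 / (η * |xstar i|) :=
    lt_of_lt_of_le hc (Nat.cast_le.2 (countVec_mono traj.S xstar htt' i))
  have hkey : (countVec traj.S xstar t' i : ℝ) * (η * |xstar i|) > 2 * supNorm X0 :=
    (div_lt_iff₀ hηx).1 hct'
  by_contra hnot
  -- find j ∈ S t' with xstar j = 0
  have hexists : ∃ j ∈ traj.S t', xstar j = 0 := by
    by_contra hsub
    push_neg at hsub
    have hsubset : traj.S t' ⊆ spt xstar := fun j hj =>
      Finset.mem_filter.2 ⟨Finset.mem_univ j, hsub j hj⟩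
    have heq : traj.S t' = spt xstar :=
      Finset.eq_of_subset_of_card_le hsubset (le_trans hspars (traj.card_S t').ge)
    exact hnot (heq ▸ hi)
  obtain ⟨j, hjS, hj0⟩ := hexists
  -- X t' j = X0 j
  have hXj : traj.X t' j = X0 j := by
    rw [X_formula traj, hj0]; ring
  have hle : |traj.X t' i| ≤ |traj.X t' j| := traj.sel t' j hjS i hnot
  have hM : |X0 j| ≤ supNorm X0 := abs_le_supNorm X0 j
  have hMi : |X0 i| ≤ supNorm X0 := abs_le_supNorm X0 i
  -- lower bound on |X t' i|
  have hXi : traj.X t' i = X0 i + (countVec traj.S xstar t' i) * (η * xstar i) :=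
    X_formula traj t' i
  have hlb : (countVec traj.S xstar t' i : ℝ) * (η * |xstar i|) - |X0 i| ≤ |traj.X t' i| := by
    rw [hXi]
    have h1 : |((countVec traj.S xstar t' i : ℝ)) * (η * xstar i)|
        = (countVec traj.S xstar t' i : ℝ) * (η * |xstar i|) := by
      rw [abs_mul, abs_mul, Nat.abs_cast, abs_of_pos hη]
    have h2 := abs_sub_abs_le_abs_sub ((countVec traj.S xstar t' i : ℝ) * (η * xstar i)) (-(X0 i))
    simp only [abs_neg, sub_neg_eq_add] at h2
    rw [add_comm] at h2
    linarith [h1 ▸ h2]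
  have hjbound : |traj.X t' j| ≤ supNorm X0 := hXj ▸ hM
  linarith [hlb, hkey, hMi, hle, hjbound]
end
end

section
/- Assume k < n and b_max < 1 / (2 Σ_{i∈S*} 1/(η|x*_i|)). Then for every SEA trajectory, for all initializations X⁰ ∈ ℝⁿ and all η > 0, there exists t_s ≤ T'_max such that S* ⊆ S^{t_s}, where T'_max = (Σ_{i∈S*} (max_{j∉S*}|X⁰_j| + |X⁰_i|)/(η|x*_i|) + k + 1) / (1 − 2 b_max Σ_{i∈S*} 1/(η|x*_i|)). -/
noncomputable section
open Finset Matrix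

/-- The oracle update direction `u^t` (for current support `S`):
`u_i = -η x*_i` for `i ∈ S* \ S` and `u_i = 0` otherwise. -/
def oracleUpd {n : ℕ} (xstar : Fin n → ℝ) (η : ℝ) (S : Finset (Fin n)) : Fin n → ℝ :=
  fun i => if xstar i ≠ 0 ∧ i ∉ S then -η * xstar i else 0

/-- The gradient noise `b = u - η Aᵀ(A x - y)`. -/
def gradNoise {m n : ℕ} (A : Matrix (Fin m) (Fin n) ℝ) (y : Fin m → ℝ)
    (xstar : Fin n → ℝ) (η : ℝ) (S : Finset (Fin n)) (xt : Fin n → ℝ) : Fin n → ℝ :=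
  oracleUpd xstar η S - η • (Aᵀ.mulVec (A.mulVec xt - y))

/-- A SEA trajectory with step size `η` and initialization `X0`. -/
structure SEATraj {m n : ℕ} (k : ℕ) (A : Matrix (Fin m) (Fin n) ℝ) (y : Fin m → ℝ)
    (η : ℝ) (X0 : Fin n → ℝ) where
  S : ℕ → Finset (Fin n)
  x : ℕ → Fin n → ℝ
  X : ℕ → Fin n → ℝ
  X_init : X 0 = X0
  card_S : ∀ t, (S t).card = k
  sel : ∀ t, ∀ i ∈ S t, ∀ j, j ∉ S t → |X t j| ≤ |X t i|
  x_supp : ∀ t, ∀ i, i ∉ S t → x t i = 0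
  x_min : ∀ t, ∀ z : Fin n → ℝ, (∀ i, i ∉ S t → z i = 0) →
    l2norm (A.mulVec (x t) - y) ≤ l2norm (A.mulVec z - y)
  X_upd : ∀ t, X (t + 1) = X t - η • (Aᵀ.mulVec (A.mulVec (x t) - y))

/-- `max_{j ∉ S*} |X⁰_j|`. -/
def maxOff {n : ℕ} (xstar X0 : Fin n → ℝ) : ℝ :=
  ⨆ j : {j : Fin n // xstar j = 0}, |X0 j.1|

/-- `T'_max = (Σ_{i∈S*} (max_{j∉S*}|X⁰_j| + |X⁰_i|)/(η|x*_i|) + k + 1)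
    / (1 − 2 b_max Σ_{i∈S*} 1/(η|x*_i|))`. -/
def TmaxP {n : ℕ} (k : ℕ) (xstar X0 : Fin n → ℝ) (η bmax : ℝ) : ℝ :=
  ((∑ i ∈ spt xstar, (maxOff xstar X0 + |X0 i|) / (η * |xstar i|)) + k + 1) /
    (1 - 2 * bmax * ∑ i ∈ spt xstar, 1 / (η * |xstar i|))

/-- Counting threshold `c̄_i = (max_{j∉S*}|X⁰_j| + |X⁰_i| + 2 T'_max b_max)/(η|x*_i|)`. -/
def cbar {n : ℕ} (k : ℕ) (xstar X0 : Fin n → ℝ) (η bmax : ℝ) (i : Fin n) : ℝ :=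
  (maxOff xstar X0 + |X0 i| + 2 * TmaxP k xstar X0 η bmax * bmax) / (η * |xstar i|)


namespace SEAHelp

variable {m n k : ℕ} {A : Matrix (Fin m) (Fin n) ℝ} {y : Fin m → ℝ}
  {η : ℝ} {X0 : Fin n → ℝ}

/-- number of times `i` was missed by the supports before time `t`. -/
def cnt (traj : SEATraj k A y η X0) (i : Fin n) (t : ℕ) : ℕ :=
  ((Finset.range t).filter (fun s => i ∉ traj.S s)).card

lemma cnt_succ (traj : SEATraj k A y η X0) (i : Fin n) (t : ℕ) :
    cnt traj i (t + 1) = cnt traj i t + (if i ∉ traj.S t then 1 else 0) := by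
  unfold cnt
  by_cases h : i ∉ traj.S t <;>
    simp [Finset.range_add_one, Finset.filter_insert, h, Finset.card_insert_of_notMem]

lemma cnt_eq_sum (traj : SEATraj k A y η X0) (i : Fin n) (t : ℕ) :
    cnt traj i t = ∑ s ∈ Finset.range t, (if i ∉ traj.S s then 1 else 0) :=
  Finset.card_filter _ _

lemma X_step (xstar : Fin n → ℝ) (traj : SEATraj k A y η X0) (t : ℕ) (i : Fin n) :
    traj.X (t + 1) i = traj.X t i
      + (if xstar i ≠ 0 ∧ i ∉ traj.S t then η * xstar i else 0)
      + gradNoise A y xstar η (traj.S t) (traj.x t) i := by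
  have h := congrFun (traj.X_upd t) i
  simp only [gradNoise, oracleUpd, Pi.sub_apply, Pi.smul_apply, smul_eq_mul] at h ⊢
  rw [h]
  split_ifs <;> ring

lemma noise_bound {xstar : Fin n → ℝ} {bmax : ℝ} (traj : SEATraj k A y η X0)
    (hbmax : ∀ t, supNorm (gradNoise A y xstar η (traj.S t) (traj.x t)) ≤ bmax)
    (t : ℕ) (i : Fin n) :
    |gradNoise A y xstar η (traj.S t) (traj.x t) i| ≤ bmax := by
  refine le_trans ?_ (hbmax t)
  unfold supNorm
  exact le_ciSup (f := fun j => |gradNoise A y xstar η (traj.S t) (traj.x t) j|)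
    (Set.Finite.bddAbove (Set.finite_range _)) i

lemma maxOff_le {xstar : Fin n → ℝ} {j : Fin n} (hj : xstar j = 0) :
    |X0 j| ≤ maxOff xstar X0 := by
  unfold maxOff
  exact le_ciSup (f := fun j : {j : Fin n // xstar j = 0} => |X0 j.1|)
    (Set.Finite.bddAbove (Set.finite_range _)) ⟨j, hj⟩

lemma off_bound {xstar : Fin n → ℝ} {bmax : ℝ} (traj : SEATraj k A y η X0)
    (hbmax : ∀ t, supNorm (gradNoise A y xstar η (traj.S t) (traj.x t)) ≤ bmax)
    {j : Fin n} (hj : xstar j = 0) :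
    ∀ t, |traj.X t j| ≤ maxOff xstar X0 + t * bmax := by
  intro t
  induction t with
  | zero => simpa [traj.X_init] using maxOff_le (X0 := X0) hj
  | succ t ih =>
      have hstep := X_step xstar traj t j
      have hb := noise_bound traj hbmax t j
      have h0 : (if xstar j ≠ 0 ∧ j ∉ traj.S t then η * xstar j else 0) = 0 := by
        simp [hj]
      rw [h0, add_zero] at hstep
      calc |traj.X (t + 1) j|
          = |traj.X t j + gradNoise A y xstar η (traj.S t) (traj.x t) j| := by rw [hstep]
        _ ≤ |traj.X t j| + |gradNoise A y xstar η (traj.S t) (traj.x t) j| := abs_add_le _ _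
        _ ≤ (maxOff xstar X0 + t * bmax) + bmax := add_le_add ih hb
        _ = maxOff xstar X0 + (t + 1 : ℕ) * bmax := by push_cast; ring

lemma growth {xstar : Fin n → ℝ} {bmax : ℝ} (traj : SEATraj k A y η X0)
    (hbmax : ∀ t, supNorm (gradNoise A y xstar η (traj.S t) (traj.x t)) ≤ bmax)
    {i : Fin n} (hi : xstar i ≠ 0) :
    ∀ t, (if 0 ≤ xstar i then (1 : ℝ) else -1) * X0 i
        + (cnt traj i t : ℝ) * (η * |xstar i|) - t * bmax
      ≤ (if 0 ≤ xstar i then (1 : ℝ) else -1) * traj.X t i := by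
  set sg : ℝ := if 0 ≤ xstar i then (1 : ℝ) else -1 with hsg
  have hsgx : sg * xstar i = |xstar i| := by
    rw [hsg]; split_ifs with h
    · rw [one_mul, abs_of_nonneg h]
    · rw [abs_of_neg (lt_of_not_ge h)]; ring
  have hsgabs : |sg| = 1 := by rw [hsg]; split_ifs <;> simp
  intro t
  induction t with
  | zero =>
      have h0 : cnt traj i 0 = 0 := by simp [cnt]
      rw [traj.X_init, h0]
      norm_num
  | succ t ih =>
      have hstep := X_step xstar traj t i
      have hb : -bmax ≤ sg * gradNoise A y xstar η (traj.S t) (traj.x t) i := by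
        have h1 := noise_bound traj hbmax t i
        have h2 : |sg * gradNoise A y xstar η (traj.S t) (traj.x t) i|
            = |gradNoise A y xstar η (traj.S t) (traj.x t) i| := by
          rw [abs_mul, hsgabs, one_mul]
        nlinarith [neg_abs_le (sg * gradNoise A y xstar η (traj.S t) (traj.x t) i)]
      have hcnt := cnt_succ traj i t
      by_cases hS : i ∉ traj.S t
      · have hite : (if xstar i ≠ 0 ∧ i ∉ traj.S t then η * xstar i else 0) = η * xstar i := by
          simp [hi, hS]
        have hc : (cnt traj i (t + 1) : ℝ) = (cnt traj i t : ℝ) + 1 := by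
          rw [hcnt]; simp [hS]
        have : sg * traj.X (t + 1) i
            = sg * traj.X t i + η * |xstar i|
              + sg * gradNoise A y xstar η (traj.S t) (traj.x t) i := by
          rw [hstep, hite]; rw [← hsgx]; ring
        rw [this, hc]
        push_cast
        nlinarith [ih, hb]
      · have hite : (if xstar i ≠ 0 ∧ i ∉ traj.S t then η * xstar i else 0) = 0 := by
          simp [hS]
        have hc : (cnt traj i (t + 1) : ℝ) = (cnt traj i t : ℝ) := by
          rw [hcnt]; simp [hS]
        have : sg * traj.X (t + 1) i
            = sg * traj.X t i + sg * gradNoise A y xstar η (traj.S t) (traj.x t) i := by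
          rw [hstep, hite]; ring
        rw [this, hc]
        push_cast
        nlinarith [ih, hb]

lemma exists_zero_in_S {xstar : Fin n → ℝ} (traj : SEATraj k A y η X0)
    (hspars : (spt xstar).card ≤ k) {t : ℕ} {i : Fin n}
    (hi : xstar i ≠ 0) (hit : i ∉ traj.S t) :
    ∃ j ∈ traj.S t, xstar j = 0 := by
  by_contra h
  push_neg at h
  have hsub : insert i (traj.S t) ⊆ spt xstar := by
    intro j hj
    rcases Finset.mem_insert.mp hj with rfl | hj
    · simp [spt, hi]
    · simp [spt, h j hj]
  have hcard : k + 1 ≤ (spt xstar).card := by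
    have := Finset.card_le_card hsub
    rwa [Finset.card_insert_of_notMem hit, traj.card_S t] at this
  omega

lemma miss_bound {xstar : Fin n → ℝ} {bmax : ℝ} (traj : SEATraj k A y η X0)
    (hbmax : ∀ t, supNorm (gradNoise A y xstar η (traj.S t) (traj.x t)) ≤ bmax)
    (hspars : (spt xstar).card ≤ k) {t : ℕ} {i : Fin n}
    (hi : xstar i ≠ 0) (hit : i ∉ traj.S t) :
    (cnt traj i t : ℝ) * (η * |xstar i|)
      ≤ maxOff xstar X0 + |X0 i| + 2 * t * bmax := by
  obtain ⟨j, hjS, hj0⟩ := exists_zero_in_S traj hspars hi hit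
  have hXj : |traj.X t j| ≤ maxOff xstar X0 + t * bmax := off_bound traj hbmax hj0 t
  have hsel : |traj.X t i| ≤ |traj.X t j| := traj.sel t j hjS i hit
  have hg := growth traj hbmax hi t
  set sg : ℝ := if 0 ≤ xstar i then (1 : ℝ) else -1 with hsg
  have hsgabs : |sg| = 1 := by rw [hsg]; split_ifs <;> simp
  have h1 : sg * traj.X t i ≤ |traj.X t i| := by
    calc sg * traj.X t i ≤ |sg * traj.X t i| := le_abs_self _
      _ = |traj.X t i| := by rw [abs_mul, hsgabs, one_mul]
  have h2 : -|X0 i| ≤ sg * X0 i := by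
    have : |sg * X0 i| = |X0 i| := by rw [abs_mul, hsgabs, one_mul]
    nlinarith [neg_abs_le (sg * X0 i)]
  nlinarith [hg, h1, h2, hsel, hXj]

lemma cnt_bound {xstar : Fin n → ℝ} {bmax : ℝ} (traj : SEATraj k A y η X0)
    (hbmax : ∀ t, supNorm (gradNoise A y xstar η (traj.S t) (traj.x t)) ≤ bmax)
    (hspars : (spt xstar).card ≤ k) (hmo : 0 ≤ maxOff xstar X0) (hb0 : 0 ≤ bmax)
    (hη : 0 < η) {i : Fin n} (hi : xstar i ≠ 0) :
    ∀ t, (cnt traj i t : ℝ) * (η * |xstar i|)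
      ≤ maxOff xstar X0 + |X0 i| + 2 * t * bmax + η * |xstar i| := by
  intro t
  have hpos : 0 < η * |xstar i| := by positivity
  induction t with
  | zero =>
      simp only [cnt, Finset.range_zero, Finset.filter_empty, Finset.card_empty,
        Nat.cast_zero, zero_mul, Nat.cast_zero]
      positivity
  | succ t ih =>
      have hcnt := cnt_succ traj i t
      by_cases hS : i ∉ traj.S t
      · have hc : (cnt traj i (t + 1) : ℝ) = (cnt traj i t : ℝ) + 1 := by
          rw [hcnt]; simp [hS]
        have hm := miss_bound traj hbmax hspars hi hS
        rw [hc]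
        push_cast
        nlinarith [hm]
      · have hc : (cnt traj i (t + 1) : ℝ) = (cnt traj i t : ℝ) := by
          rw [hcnt]; simp [hS]
        rw [hc]
        push_cast
        nlinarith [ih]

lemma count_lower {xstar : Fin n → ℝ} (traj : SEATraj k A y η X0) (T : ℕ)
    (h : ∀ s < T, ∃ i ∈ spt xstar, i ∉ traj.S s) :
    T ≤ ∑ i ∈ spt xstar, cnt traj i T := by
  have : ∑ i ∈ spt xstar, cnt traj i T
      = ∑ s ∈ Finset.range T, ∑ i ∈ spt xstar, (if i ∉ traj.S s then 1 else 0) := by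
    rw [Finset.sum_comm]
    exact Finset.sum_congr rfl fun i _ => cnt_eq_sum traj i T
  rw [this]
  calc T = ∑ _s ∈ Finset.range T, 1 := by simp
    _ ≤ _ := by
        refine Finset.sum_le_sum fun s hs => ?_
        obtain ⟨i, hi, hiS⟩ := h s (Finset.mem_range.mp hs)
        calc 1 = (if i ∉ traj.S s then 1 else 0) := by simp [hiS]
          _ ≤ ∑ i ∈ spt xstar, (if i ∉ traj.S s then 1 else 0) :=
              Finset.single_le_sum (f := fun i => if i ∉ traj.S s then 1 else 0)
                (fun _ _ => Nat.zero_le _) hi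

end SEAHelp

/-- Recovery (general case, sharp form): under (H_r'), SEA visits the true
support within `T'_max` iterations. -/
theorem sea_recovery_sharp {m n k : ℕ} (hm : 0 < m) (hk : 0 < k) (hkn : k < n)
    (A : Matrix (Fin m) (Fin n) ℝ)
    (xstar : Fin n → ℝ) (hspars : (spt xstar).card ≤ k) (hne : (spt xstar).Nonempty)
    (e : Fin m → ℝ) (y : Fin m → ℝ) (hy : y = A.mulVec xstar + e)
    (η : ℝ) (hη : 0 < η) (X0 : Fin n → ℝ)
    (traj : SEATraj k A y η X0)
    (bmax : ℝ)
    (hbmax : ∀ t, supNorm (gradNoise A y xstar η (traj.S t) (traj.x t)) ≤ bmax)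
    (hsmall : bmax < 1 / (2 * ∑ i ∈ spt xstar, 1 / (η * |xstar i|))) :
    ∃ ts : ℕ, (ts : ℝ) ≤ TmaxP k xstar X0 η bmax ∧ spt xstar ⊆ traj.S ts := by
  classical
  set Q : ℝ := ∑ i ∈ spt xstar, 1 / (η * |xstar i|) with hQdef
  set P : ℝ := ∑ i ∈ spt xstar, (maxOff xstar X0 + |X0 i|) / (η * |xstar i|) with hPdef
  have hmem : ∀ i ∈ spt xstar, xstar i ≠ 0 := by
    intro i hi; exact (Finset.mem_filter.mp hi).2
  have hQpos : 0 < Q := by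
    refine Finset.sum_pos (fun i hi => ?_) hne
    have := hmem i hi
    positivity
  have hbQ : 2 * bmax * Q < 1 := by
    have := (lt_div_iff₀ (by positivity : (0:ℝ) < 2 * Q)).mp hsmall
    nlinarith
  have hn : 0 < n := lt_of_le_of_lt (Nat.zero_le k) hkn
  have hb0 : 0 ≤ bmax := by
    refine le_trans (abs_nonneg _) (SEAHelp.noise_bound traj hbmax 0 ⟨0, hn⟩)
  obtain ⟨j0, hj0⟩ : ∃ j, xstar j = 0 := by
    by_contra h
    push_neg at h
    have hsub : (Finset.univ : Finset (Fin n)) ⊆ spt xstar := by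
      intro j _; simp [spt, h j]
    have := Finset.card_le_card hsub
    simp at this
    omega
  have hmo : 0 ≤ maxOff xstar X0 :=
    le_trans (abs_nonneg _) (SEAHelp.maxOff_le (X0 := X0) hj0)
  have hPnn : 0 ≤ P := by
    refine Finset.sum_nonneg fun i hi => ?_
    have := hmem i hi
    positivity
  have hD : 0 < 1 - 2 * bmax * Q := by linarith
  have hTeq : TmaxP k xstar X0 η bmax = (P + k + 1) / (1 - 2 * bmax * Q) := rfl
  have hT0 : 0 ≤ TmaxP k xstar X0 η bmax := by
    rw [hTeq]; positivity
  by_contra hcon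
  push_neg at hcon
  set N : ℕ := ⌊TmaxP k xstar X0 η bmax⌋₊ with hNdef
  have hmiss : ∀ s < N + 1, ∃ i ∈ spt xstar, i ∉ traj.S s := by
    intro s hs
    have hsle : (s : ℝ) ≤ TmaxP k xstar X0 η bmax := by
      have : (s : ℝ) ≤ (N : ℝ) := by exact_mod_cast Nat.lt_succ_iff.mp hs
      exact le_trans this (Nat.floor_le hT0)
    exact Finset.not_subset.mp (hcon s hsle)
  have hlow : (N + 1 : ℝ) ≤ ∑ i ∈ spt xstar, (SEAHelp.cnt traj i (N + 1) : ℝ) := by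
    have := SEAHelp.count_lower traj (N + 1) hmiss
    calc (N + 1 : ℝ) = ((N + 1 : ℕ) : ℝ) := by push_cast; ring
      _ ≤ ((∑ i ∈ spt xstar, SEAHelp.cnt traj i (N + 1) : ℕ) : ℝ) := by exact_mod_cast this
      _ = _ := by push_cast; ring
  have hup : ∀ i ∈ spt xstar, (SEAHelp.cnt traj i (N + 1) : ℝ)
      ≤ (maxOff xstar X0 + |X0 i|) / (η * |xstar i|)
        + 2 * (N + 1) * bmax * (1 / (η * |xstar i|)) + 1 := by
    intro i hi
    have hxi := hmem i hi
    have hpos : 0 < η * |xstar i| := by positivity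
    have hcb := SEAHelp.cnt_bound traj hbmax hspars hmo hb0 hη hxi (N + 1)
    have h1 : (SEAHelp.cnt traj i (N + 1) : ℝ)
        ≤ (maxOff xstar X0 + |X0 i| + 2 * (N + 1) * bmax + η * |xstar i|)
          / (η * |xstar i|) := by
      rw [le_div_iff₀ hpos]
      have hcb' := hcb
      push_cast at hcb' ⊢
      linarith
    refine le_trans h1 (le_of_eq ?_)
    field_simp
    try ring
  have hsumup : ∑ i ∈ spt xstar, (SEAHelp.cnt traj i (N + 1) : ℝ)
      ≤ P + 2 * (N + 1) * bmax * Q + k := by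
    calc ∑ i ∈ spt xstar, (SEAHelp.cnt traj i (N + 1) : ℝ)
        ≤ ∑ i ∈ spt xstar, ((maxOff xstar X0 + |X0 i|) / (η * |xstar i|)
            + 2 * (N + 1) * bmax * (1 / (η * |xstar i|)) + 1) :=
          Finset.sum_le_sum hup
      _ = P + 2 * (N + 1) * bmax * Q + (spt xstar).card := by
          rw [Finset.sum_add_distrib, Finset.sum_add_distrib, Finset.mul_sum]
          simp [hPdef, hQdef]
      _ ≤ P + 2 * (N + 1) * bmax * Q + k := by
          have : ((spt xstar).card : ℝ) ≤ (k : ℝ) := by exact_mod_cast hspars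
          linarith
  have hkey : ((N : ℝ) + 1) * (1 - 2 * bmax * Q) ≤ P + k := by nlinarith [hlow, hsumup]
  have hfloor : TmaxP k xstar X0 η bmax < (N : ℝ) + 1 := Nat.lt_floor_add_one _
  rw [hTeq, div_lt_iff₀ hD] at hfloor
  nlinarith [hkey, hfloor]


end
end

section
/- Assume b_max < (η/(2k)) · min_{i∈S*} |x*_i|. Then for every SEA trajectory, for all initializations X⁰ ∈ ℝⁿ and all η > 0, there exists t_s ≤ T_max such that S* ⊆ S^{t_s}, where T_max = (2k‖X⁰‖_∞ + (k+1) η min_{i∈S*}|x*_i|) / (η min_{i∈S*}|x*_i| − 2k b_max). -/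
noncomputable section
open Finset Matrix

/-! ### Auxiliary lemmas -/

/-- Sign of a real number, valued in `{1, -1}`. -/
def sgn (a : ℝ) : ℝ := if 0 ≤ a then 1 else -1

lemma abs_sgn (a : ℝ) : |sgn a| = 1 := by
  unfold sgn; split_ifs <;> simp

lemma sgn_mul_self {a : ℝ} (h : a ≠ 0) : sgn a * a = |a| := by
  unfold sgn; split_ifs with h1
  · rw [one_mul, abs_of_nonneg h1]
  · push_neg at h1
    rw [abs_of_neg h1]; ring

lemma abs_sgn_mul (a b : ℝ) : |sgn a * b| = |b| := by
  rw [abs_mul, abs_sgn, one_mul]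

lemma neg_abs_le_sgn_mul (a b : ℝ) : -|b| ≤ sgn a * b := by
  have h := neg_abs_le (sgn a * b); rwa [abs_sgn_mul] at h

lemma sgn_mul_le_abs (a b : ℝ) : sgn a * b ≤ |b| := by
  have h := le_abs_self (sgn a * b); rwa [abs_sgn_mul] at h

lemma min_step_in {z z' c B : ℝ} (hB : 0 ≤ B) (hz : z - B ≤ z') :
    min z c - B ≤ min z' (c + B) := by
  refine le_min ?_ ?_
  · linarith [min_le_left z c]
  · linarith [min_le_right z c]

lemma min_step_out {z z' c M g B : ℝ} (hB : 0 ≤ B) (hz : z + g - B ≤ z')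
    (hzM : z ≤ M) (hcM : M + g ≤ c + B) : min z c + g - B ≤ min z' (c + B) := by
  refine le_min ?_ ?_
  · linarith [min_le_left z c]
  · linarith [min_le_left z c]

/-- Recovery (general case): under (H_r), SEA visits the true support within
`T_max` iterations. -/
theorem sea_recovery_general {m n k : ℕ} (hm : 0 < m) (hk : 0 < k) (hkn : k < n)
    (A : Matrix (Fin m) (Fin n) ℝ)
    (xstar : Fin n → ℝ) (hspars : (spt xstar).card ≤ k) (hne : (spt xstar).Nonempty)
    (e : Fin m → ℝ) (y : Fin m → ℝ) (hy : y = A.mulVec xstar + e)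
    (η : ℝ) (hη : 0 < η) (X0 : Fin n → ℝ)
    (traj : SEATraj k A y η X0)
    (bmax : ℝ)
    (hbmax : ∀ t, supNorm (gradNoise A y xstar η (traj.S t) (traj.x t)) ≤ bmax)
    (hsmall : bmax < (η / (2 * k)) * (spt xstar).inf' hne (fun i => |xstar i|)) :
    ∃ ts : ℕ,
      (ts : ℝ) ≤ (2 * k * supNorm X0
          + (k + 1) * η * (spt xstar).inf' hne (fun i => |xstar i|)) /
        (η * (spt xstar).inf' hne (fun i => |xstar i|) - 2 * k * bmax) ∧
      spt xstar ⊆ traj.S ts := by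
  classical
  set xm := (spt xstar).inf' hne (fun i => |xstar i|) with hxm_def
  set M0 := supNorm X0 with hM0_def
  have hn : 0 < n := hk.trans hkn
  have habs : ∀ (v : Fin n → ℝ) (i : Fin n), |v i| ≤ supNorm v := by
    intro v i
    have hbdd : BddAbove (Set.range fun j => |v j|) := (Set.finite_range _).bddAbove
    exact le_ciSup hbdd i
  have hB0 : 0 ≤ bmax :=
    le_trans (le_trans (abs_nonneg _) (habs _ ⟨0, hn⟩)) (hbmax 0)
  have hM0 : ∀ i, |X0 i| ≤ M0 := fun i => habs X0 i
  have hM0nn : 0 ≤ M0 := le_trans (abs_nonneg _) (hM0 ⟨0, hn⟩)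
  have hmem : ∀ i, i ∈ spt xstar ↔ xstar i ≠ 0 := by
    intro i; simp [spt]
  have hxm_pos : 0 < xm := by
    rw [hxm_def, Finset.lt_inf'_iff]
    intro i hi
    exact abs_pos.mpr ((hmem i).mp hi)
  have hxm_le : ∀ i ∈ spt xstar, xm ≤ |xstar i| := fun i hi => Finset.inf'_le _ hi
  have hbabs : ∀ t i, |gradNoise A y xstar η (traj.S t) (traj.x t) i| ≤ bmax :=
    fun t i => le_trans (habs _ i) (hbmax t)
  have key : ∀ t i, traj.X (t + 1) i =
      traj.X t i + (if xstar i ≠ 0 ∧ i ∉ traj.S t then η * xstar i else 0)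
        + gradNoise A y xstar η (traj.S t) (traj.x t) i := by
    intro t i
    have h := congrFun (traj.X_upd t) i
    simp only [Pi.sub_apply, Pi.smul_apply, smul_eq_mul] at h
    have h2 : gradNoise A y xstar η (traj.S t) (traj.x t) i
        = oracleUpd xstar η (traj.S t) i
          - η * (Aᵀ.mulVec (A.mulVec (traj.x t) - y)) i := by
      simp [gradNoise, Pi.sub_apply, Pi.smul_apply, smul_eq_mul]
    have h3 : (if xstar i ≠ 0 ∧ i ∉ traj.S t then η * xstar i else 0)
        = - oracleUpd xstar η (traj.S t) i := by
      unfold oracleUpd; split <;> ring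
    rw [h, h3]
    linarith [h2]
  -- off-support coordinates stay bounded
  have hE : ∀ t j, xstar j = 0 → |traj.X t j| ≤ M0 + t * bmax := by
    intro t
    induction t with
    | zero =>
      intro j hj
      simpa [traj.X_init] using hM0 j
    | succ t ih =>
      intro j hj
      have hk1 := key t j
      rw [if_neg (by simp [hj])] at hk1
      have h1 := hbabs t j
      have h2 := ih j hj
      have h3 : |traj.X (t + 1) j|
          ≤ |traj.X t j| + |gradNoise A y xstar η (traj.S t) (traj.x t) j| := by
        rw [hk1, add_zero]; exact abs_add_le _ _
      push_cast
      push_cast at h2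
      linarith
  -- out-of-S* support coordinates bound in-support out-of-S ones
  have hF : ∀ t, ¬ spt xstar ⊆ traj.S t → ∀ i ∈ spt xstar, i ∉ traj.S t →
      |traj.X t i| ≤ M0 + t * bmax := by
    intro t hns i hi hiS
    have hex : ∃ j ∈ traj.S t, j ∉ spt xstar := by
      by_contra hcon
      push_neg at hcon
      have heq := Finset.eq_of_subset_of_card_le hcon
        (by rw [traj.card_S]; exact hspars)
      rw [heq] at hns
      exact hns (Finset.Subset.refl _)
    obtain ⟨j, hjS, hjn⟩ := hex
    have hj0 : xstar j = 0 := by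
      by_contra h; exact hjn ((hmem j).mpr h)
    calc |traj.X t i| ≤ |traj.X t j| := traj.sel t j hjS i hiS
      _ ≤ M0 + t * bmax := hE t j hj0
  -- per-coordinate signed dynamics
  have hZin : ∀ t i, i ∈ traj.S t →
      sgn (xstar i) * traj.X t i - bmax ≤ sgn (xstar i) * traj.X (t + 1) i := by
    intro t i hiS
    have hk1 := key t i
    rw [if_neg (by simp [hiS])] at hk1
    have hg := neg_abs_le_sgn_mul (xstar i) (gradNoise A y xstar η (traj.S t) (traj.x t) i)
    have hb := hbabs t i
    calc sgn (xstar i) * traj.X t i - bmax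
        ≤ sgn (xstar i) * traj.X t i
          + sgn (xstar i) * gradNoise A y xstar η (traj.S t) (traj.x t) i := by
          linarith
      _ = sgn (xstar i) * traj.X (t + 1) i := by rw [hk1, add_zero]; ring
  have hZout : ∀ t i, i ∈ spt xstar → i ∉ traj.S t →
      sgn (xstar i) * traj.X t i + η * xm - bmax ≤ sgn (xstar i) * traj.X (t + 1) i := by
    intro t i hi hiS
    have hi0 : xstar i ≠ 0 := (hmem i).mp hi
    have hk1 := key t i
    rw [if_pos ⟨hi0, hiS⟩] at hk1
    have hg := neg_abs_le_sgn_mul (xstar i) (gradNoise A y xstar η (traj.S t) (traj.x t) i)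
    have hb := hbabs t i
    have hxi : η * xm ≤ η * |xstar i| :=
      mul_le_mul_of_nonneg_left (hxm_le i hi) hη.le
    calc sgn (xstar i) * traj.X t i + η * xm - bmax
        ≤ sgn (xstar i) * traj.X t i + η * |xstar i|
          + sgn (xstar i) * gradNoise A y xstar η (traj.S t) (traj.x t) i := by
          linarith
      _ = sgn (xstar i) * traj.X (t + 1) i := by
          rw [hk1, ← sgn_mul_self hi0]; ring
  -- the potential
  set Φ : ℕ → ℝ := fun t => ∑ i ∈ spt xstar,
      min (sgn (xstar i) * traj.X t i) (M0 + t * bmax + η * xm) with hΦ_def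
  have hcap_succ : ∀ t : ℕ, M0 + ((t + 1 : ℕ) : ℝ) * bmax + η * xm
      = (M0 + (t : ℝ) * bmax + η * xm) + bmax := by
    intro t; push_cast; ring
  -- potential step
  have hΦstep : ∀ t, ¬ spt xstar ⊆ traj.S t →
      Φ t + (η * xm - (k : ℝ) * bmax) ≤ Φ (t + 1) := by
    intro t hns
    obtain ⟨i0, hi0, hi0S⟩ := Finset.not_subset.mp hns
    set W : ℕ → Fin n → ℝ := fun s i =>
      min (sgn (xstar i) * traj.X s i) (M0 + (s : ℝ) * bmax + η * xm) with hW_def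
    have hWweak : ∀ i ∈ spt xstar, W t i - bmax ≤ W (t + 1) i := by
      intro i hi
      by_cases hiS : i ∈ traj.S t
      · simp only [hW_def]
        rw [hcap_succ t]
        exact min_step_in hB0 (hZin t i hiS)
      · simp only [hW_def]
        rw [hcap_succ t]
        have hZle : sgn (xstar i) * traj.X t i ≤ M0 + (t : ℝ) * bmax :=
          le_trans (sgn_mul_le_abs _ _) (hF t hns i hi hiS)
        have hstrong := min_step_out (c := M0 + (t : ℝ) * bmax + η * xm)
          (M := M0 + (t : ℝ) * bmax) hB0
          (hZout t i hi hiS) hZle (by linarith [hB0])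
        have hxmnn : 0 ≤ η * xm := le_of_lt (mul_pos hη hxm_pos)
        linarith
    have hWstrong : W t i0 + η * xm - bmax ≤ W (t + 1) i0 := by
      simp only [hW_def]
      rw [hcap_succ t]
      have hZle : sgn (xstar i0) * traj.X t i0 ≤ M0 + (t : ℝ) * bmax :=
        le_trans (sgn_mul_le_abs _ _) (hF t hns i0 hi0 hi0S)
      exact min_step_out (M := M0 + (t : ℝ) * bmax) hB0
        (hZout t i0 hi0 hi0S) hZle (by linarith [hB0])
    have e1 : W t i0 + ∑ i ∈ (spt xstar).erase i0, W t i = Φ t :=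
      Finset.add_sum_erase _ _ hi0
    have e2 : W (t + 1) i0 + ∑ i ∈ (spt xstar).erase i0, W (t + 1) i = Φ (t + 1) :=
      Finset.add_sum_erase _ _ hi0
    have hsum : ∑ i ∈ (spt xstar).erase i0, (W t i - bmax)
        ≤ ∑ i ∈ (spt xstar).erase i0, W (t + 1) i :=
      Finset.sum_le_sum fun i hi => hWweak i (Finset.mem_of_mem_erase hi)
    have hsum2 : ∑ i ∈ (spt xstar).erase i0, (W t i - bmax)
        = (∑ i ∈ (spt xstar).erase i0, W t i)
          - ((spt xstar).erase i0).card * bmax := by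
      rw [Finset.sum_sub_distrib, Finset.sum_const, nsmul_eq_mul]
    have hcard_e : (((spt xstar).erase i0).card : ℝ) ≤ (k : ℝ) - 1 := by
      have h1 : ((spt xstar).erase i0).card = (spt xstar).card - 1 :=
        Finset.card_erase_of_mem hi0
      have h2 : 1 ≤ (spt xstar).card := Finset.card_pos.mpr ⟨i0, hi0⟩
      have h3 : ((spt xstar).erase i0).card + 1 ≤ k := by omega
      have h4 : (((spt xstar).erase i0).card + 1 : ℝ) ≤ (k : ℝ) := by
        exact_mod_cast h3
      linarith
    have hmul : (((spt xstar).erase i0).card : ℝ) * bmax ≤ ((k : ℝ) - 1) * bmax :=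
      mul_le_mul_of_nonneg_right hcard_e hB0
    linarith
  -- potential growth by induction
  have hΦind : ∀ T : ℕ, (∀ s < T, ¬ spt xstar ⊆ traj.S s) →
      Φ 0 + (T : ℝ) * (η * xm - (k : ℝ) * bmax) ≤ Φ T := by
    intro T
    induction T with
    | zero => intro _; simp
    | succ T ih =>
      intro hall
      have h1 := ih fun s hs => hall s (hs.trans (Nat.lt_succ_self T))
      have h2 := hΦstep T (hall T (Nat.lt_succ_self T))
      have h3 : ((T + 1 : ℕ) : ℝ) * (η * xm - (k : ℝ) * bmax)
          = (T : ℝ) * (η * xm - (k : ℝ) * bmax) + (η * xm - (k : ℝ) * bmax) := by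
        push_cast; ring
      rw [h3]; linarith
  -- initial potential lower bound
  have hΦ0 : -(k : ℝ) * M0 ≤ Φ 0 := by
    have hterm : ∀ i ∈ spt xstar,
        -M0 ≤ min (sgn (xstar i) * traj.X 0 i) (M0 + (0 : ℕ) * bmax + η * xm) := by
      intro i hi
      refine le_min ?_ ?_
      · have h1 := neg_abs_le_sgn_mul (xstar i) (traj.X 0 i)
        have h2 : |traj.X 0 i| ≤ M0 := by rw [traj.X_init]; exact hM0 i
        linarith
      · have := mul_pos hη hxm_pos
        push_cast
        linarith
    have h := Finset.card_nsmul_le_sum (spt xstar) _ _ hterm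
    rw [nsmul_eq_mul] at h
    have hc : ((spt xstar).card : ℝ) ≤ (k : ℝ) := by exact_mod_cast hspars
    have : -((k : ℝ) * M0) ≤ ((spt xstar).card : ℝ) * (-M0) := by nlinarith
    simp only [hΦ_def]
    push_cast at h ⊢
    nlinarith
  -- potential upper bound
  have hΦub : ∀ T : ℕ, Φ T ≤ (k : ℝ) * (M0 + (T : ℝ) * bmax + η * xm) := by
    intro T
    have hterm : ∀ i ∈ spt xstar,
        min (sgn (xstar i) * traj.X T i) (M0 + (T : ℝ) * bmax + η * xm)
          ≤ M0 + (T : ℝ) * bmax + η * xm := fun i _ => min_le_right _ _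
    have h := Finset.sum_le_card_nsmul (spt xstar) _ _ hterm
    rw [nsmul_eq_mul] at h
    have hc : ((spt xstar).card : ℝ) ≤ (k : ℝ) := by exact_mod_cast hspars
    have hcap_nn : 0 ≤ M0 + (T : ℝ) * bmax + η * xm := by
      have h1 : 0 ≤ (T : ℝ) * bmax := mul_nonneg (Nat.cast_nonneg T) hB0
      have h2 := mul_pos hη hxm_pos
      linarith
    have h2 : ((spt xstar).card : ℝ) * (M0 + (T : ℝ) * bmax + η * xm)
        ≤ (k : ℝ) * (M0 + (T : ℝ) * bmax + η * xm) :=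
      mul_le_mul_of_nonneg_right hc hcap_nn
    calc Φ T ≤ ((spt xstar).card : ℝ) * (M0 + (T : ℝ) * bmax + η * xm) := h
      _ ≤ _ := h2
  -- denominator positivity
  have hkpos : (0 : ℝ) < (k : ℝ) := Nat.cast_pos.mpr hk
  have hD : 0 < η * xm - 2 * (k : ℝ) * bmax := by
    have h2k : (0 : ℝ) < 2 * (k : ℝ) := by linarith
    rw [div_mul_eq_mul_div, lt_div_iff₀ h2k] at hsmall
    nlinarith
  set R := (2 * (k : ℝ) * M0 + ((k : ℝ) + 1) * η * xm)
      / (η * xm - 2 * (k : ℝ) * bmax) with hR_def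
  have hnum : 0 ≤ 2 * (k : ℝ) * M0 + ((k : ℝ) + 1) * η * xm := by
    have h1 : 0 ≤ 2 * (k : ℝ) * M0 := mul_nonneg (by linarith) hM0nn
    have h2 : 0 ≤ ((k : ℝ) + 1) * η * xm :=
      mul_nonneg (mul_nonneg (by linarith) hη.le) hxm_pos.le
    linarith
  have hRnn : 0 ≤ R := div_nonneg hnum hD.le
  by_contra hcon
  push_neg at hcon
  set T := Nat.floor R + 1 with hT_def
  have hall : ∀ s < T, ¬ spt xstar ⊆ traj.S s := by
    intro s hs
    apply hcon
    have hs' : s ≤ Nat.floor R := Nat.lt_succ_iff.mp hs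
    calc (s : ℝ) ≤ (Nat.floor R : ℝ) := Nat.cast_le.mpr hs'
      _ ≤ R := Nat.floor_le hRnn
  have h1 := hΦind T hall
  have h2 := hΦub T
  have h4 : (T : ℝ) * (η * xm - 2 * (k : ℝ) * bmax)
      ≤ 2 * (k : ℝ) * M0 + ((k : ℝ) + 1) * η * xm := by
    have exp1 : (T : ℝ) * (η * xm - (k : ℝ) * bmax)
        = (T : ℝ) * (η * xm - 2 * (k : ℝ) * bmax) + (T : ℝ) * ((k : ℝ) * bmax) := by
      ring
    have exp2 : (k : ℝ) * (M0 + (T : ℝ) * bmax + η * xm)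
        = (k : ℝ) * M0 + (T : ℝ) * ((k : ℝ) * bmax) + (k : ℝ) * (η * xm) := by
      ring
    have hxmnn : 0 ≤ η * xm := le_of_lt (mul_pos hη hxm_pos)
    nlinarith [hΦ0]
  have h5 : (T : ℝ) ≤ R := by
    rw [hR_def, le_div_iff₀ hD]
    exact h4
  have h6 : T ≤ Nat.floor R := Nat.le_floor h5
  omega


end
end

section
/- Assume A ∈ ℝ^{m×n} has orthonormal columns (Aᵀ A = I_n), e = 0, and k < n. Then for every SEA trajectory with initialization X⁰ = 0 and any step size η > 0, for every integer T ≥ k + 1, letting t_B be a minimizer of t ↦ ‖A x^t − y‖₂ over t ∈ {0,…,T}, one has S* ⊆ S^{t_B} and x^{t_B} = x*. -/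
noncomputable section
open Finset Matrix

/-- Recovery in the orthogonal, noiseless case: with `X⁰ = 0`, after at least
`k + 1` iterations the best iterate has the true support and equals `x*`. -/
theorem sea_recovery_orthogonal {m n k : ℕ} (hm : 0 < m) (hk : 0 < k) (hkn : k < n)
    (hnm : n ≤ m)
    (A : Matrix (Fin m) (Fin n) ℝ) (hortho : Aᵀ * A = 1)
    (xstar : Fin n → ℝ) (hspars : (spt xstar).card ≤ k) (hne : (spt xstar).Nonempty)
    (e : Fin m → ℝ) (he : e = 0) (y : Fin m → ℝ) (hy : y = A.mulVec xstar + e)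
    (η : ℝ) (hη : 0 < η) (X0 : Fin n → ℝ) (hX0 : X0 = 0)
    (traj : SEATraj k A y η X0)
    (T : ℕ) (hT : k + 1 ≤ T)
    (tB : ℕ) (htB : tB ≤ T)
    (hbest : ∀ t ≤ T, l2norm (A.mulVec (traj.x tB) - y) ≤ l2norm (A.mulVec (traj.x t) - y)) :
    spt xstar ⊆ traj.S tB ∧ traj.x tB = xstar := by
  subst he hX0
  rw [add_zero] at hy
  subst hy
  -- basic consequences of orthonormal columns
  have hAtA : ∀ v : Fin n → ℝ, Aᵀ.mulVec (A.mulVec v) = v := by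
    intro v; rw [Matrix.mulVec_mulVec, hortho, Matrix.one_mulVec]
  have hnormsq : ∀ v : Fin n → ℝ, ∑ j, (A.mulVec v j) ^ 2 = ∑ i, (v i) ^ 2 := by
    intro v
    have h1 : A.mulVec v ⬝ᵥ A.mulVec v = v ⬝ᵥ v := by
      rw [Matrix.dotProduct_mulVec, ← Matrix.mulVec_transpose, hAtA]
    simpa [dotProduct, sq] using h1
  have hres : ∀ z : Fin n → ℝ,
      ∑ j, ((A.mulVec z - A.mulVec xstar) j) ^ 2 = ∑ i, (z i - xstar i) ^ 2 := by
    intro z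
    have h1 : A.mulVec z - A.mulVec xstar = A.mulVec (z - xstar) := by
      rw [Matrix.mulVec_sub]
    rw [h1, hnormsq]
    simp [Pi.sub_apply]
  have sqle : ∀ u w : Fin m → ℝ, l2norm u ≤ l2norm w →
      ∑ j, (u j) ^ 2 ≤ ∑ j, (w j) ^ 2 := by
    intro u w h
    have hu : (0:ℝ) ≤ ∑ j, (u j) ^ 2 := by positivity
    have hw : (0:ℝ) ≤ ∑ j, (w j) ^ 2 := by positivity
    have h1 := Real.sq_sqrt hu
    have h2 := Real.sq_sqrt hw
    have h3 := Real.sqrt_nonneg (∑ j, (u j) ^ 2)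
    have h4 := Real.sqrt_nonneg (∑ j, (w j) ^ 2)
    unfold l2norm at h
    nlinarith
  -- characterization of the least-squares iterate
  have hxchar : ∀ t, traj.x t = fun i => if i ∈ traj.S t then xstar i else 0 := by
    intro t
    set z : Fin n → ℝ := fun i => if i ∈ traj.S t then xstar i else 0 with hz
    have hzsupp : ∀ i, i ∉ traj.S t → z i = 0 := by
      intro i hi; simp [hz, hi]
    have hsum : ∑ i, (traj.x t i - xstar i) ^ 2 ≤ ∑ i, (z i - xstar i) ^ 2 := by
      have h1 := sqle _ _ (traj.x_min t z hzsupp)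
      rwa [hres, hres] at h1
    have hterm : ∀ i, (z i - xstar i) ^ 2 ≤ (traj.x t i - xstar i) ^ 2 := by
      intro i
      by_cases hi : i ∈ traj.S t
      · simpa [hz, hi] using sq_nonneg (traj.x t i - xstar i)
      · rw [traj.x_supp t i hi]
        simp [hz, hi]
    have hsum2 : ∑ i, (z i - xstar i) ^ 2 ≤ ∑ i, (traj.x t i - xstar i) ^ 2 :=
      Finset.sum_le_sum (fun i _ => hterm i)
    have heq : ∑ i, (z i - xstar i) ^ 2 = ∑ i, (traj.x t i - xstar i) ^ 2 :=
      le_antisymm hsum2 hsum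
    have hall := (Finset.sum_eq_sum_iff_of_le (fun i _ => hterm i)).mp heq
    funext i
    by_cases hi : i ∈ traj.S t
    · have h := (hall i (Finset.mem_univ i)).symm
      have hzi : z i = xstar i := by simp [hz, hi]
      rw [hzi] at h
      simp only [sub_self, ne_eq] at h
      have : traj.x t i - xstar i = 0 := by
        have := sq_eq_zero_iff.mp (by linarith [sq_nonneg (traj.x t i - xstar i), h.symm] : (traj.x t i - xstar i) ^ 2 = 0)
        exact this
      have hx : traj.x t i = xstar i := by linarith
      simp [hz, hi, hx]
    · rw [traj.x_supp t i hi]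
      simp [hz, hi]
  -- explicit formula for X
  have hXf : ∀ t i, traj.X t i =
      η * xstar i * (((Finset.range t).filter (fun s => i ∉ traj.S s)).card : ℝ) := by
    intro t
    induction t with
    | zero => intro i; simp [traj.X_init]
    | succ t ih =>
      intro i
      have hupd := congrFun (traj.X_upd t) i
      have hgrad : Aᵀ.mulVec (A.mulVec (traj.x t) - A.mulVec xstar) = traj.x t - xstar := by
        rw [show A.mulVec (traj.x t) - A.mulVec xstar = A.mulVec (traj.x t - xstar) by
          rw [Matrix.mulVec_sub], hAtA]
      rw [hgrad] at hupd
      simp only [Pi.sub_apply, Pi.smul_apply, smul_eq_mul] at hupd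
      have hx := congrFun (hxchar t) i
      rw [Finset.range_add_one, Finset.filter_insert]
      by_cases hi : i ∈ traj.S t
      · simp only [hi, not_true_eq_false, if_false]
        have hxi : traj.x t i = xstar i := by simp [hx, hi]
        rw [hupd, hxi, ih i]
        ring
      · simp only [hi, not_false_eq_true, if_true]
        have hxi : traj.x t i = 0 := by simp [hx, hi]
        rw [Finset.card_insert_of_notMem (by simp), hupd, hxi, ih i]
        push_cast
        ring
  -- freshness: a missed support index has never been missed before
  have hfresh : ∀ t, ¬ (spt xstar ⊆ traj.S t) → ∀ i ∈ spt xstar, i ∉ traj.S t →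
      ∀ s < t, i ∈ traj.S s := by
    intro t hbad i hi hiS s hs
    have hnsub : ¬ traj.S t ⊆ spt xstar := by
      intro hsub
      have heq : traj.S t = spt xstar :=
        Finset.eq_of_subset_of_card_le hsub (by rw [traj.card_S]; exact hspars)
      exact hbad (heq ▸ Finset.Subset.refl _)
    obtain ⟨j, hjS, hjspt⟩ := Finset.not_subset.mp hnsub
    have hxj : xstar j = 0 := by
      by_contra h
      exact hjspt (Finset.mem_filter.mpr ⟨Finset.mem_univ j, h⟩)
    have hXj : traj.X t j = 0 := by rw [hXf]; simp [hxj]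
    have habs := traj.sel t j hjS i hiS
    rw [hXj] at habs
    simp only [abs_zero] at habs
    have hXi : traj.X t i = 0 := abs_eq_zero.mp (le_antisymm habs (abs_nonneg _))
    rw [hXf] at hXi
    have hxi : xstar i ≠ 0 := by
      have := Finset.mem_filter.mp hi; exact this.2
    have hcard : (((Finset.range t).filter (fun s => i ∉ traj.S s)).card : ℝ) = 0 := by
      rcases mul_eq_zero.mp hXi with h | h
      · rcases mul_eq_zero.mp h with h' | h'
        · exact absurd h' (ne_of_gt hη)
        · exact absurd h' hxi
      · exact h
    have hemp : ((Finset.range t).filter (fun s => i ∉ traj.S s)) = ∅ :=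
      Finset.card_eq_zero.mp (by exact_mod_cast hcard)
    by_contra hcon
    have hmem : s ∈ (Finset.range t).filter (fun s => i ∉ traj.S s) :=
      Finset.mem_filter.mpr ⟨Finset.mem_range.mpr hs, hcon⟩
    rw [hemp] at hmem
    exact absurd hmem (Finset.notMem_empty s)
  -- there is a good time with full support
  have hgood : ∃ t ≤ T, spt xstar ⊆ traj.S t := by
    by_contra hcon
    push_neg at hcon
    have hwex : ∀ t : ℕ, ∃ i : Fin n, t ≤ T → (i ∈ spt xstar ∧ i ∉ traj.S t) := by
      intro t
      by_cases ht : t ≤ T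
      · obtain ⟨i, hi1, hi2⟩ := Finset.not_subset.mp (hcon t ht)
        exact ⟨i, fun _ => ⟨hi1, hi2⟩⟩
      · exact ⟨⟨0, lt_of_le_of_lt (Nat.zero_le k) hkn⟩, fun h => absurd h ht⟩
    choose w hw using hwex
    have hne' : ∀ a b : ℕ, a < b → a ≤ T → b ≤ T → w a ≠ w b := by
      intro a b hab haT hbT heqw
      have hwa := hw a haT
      have hwb := hw b hbT
      have hmem : w b ∈ traj.S a := hfresh b (hcon b hbT) (w b) hwb.1 hwb.2 a hab
      rw [← heqw] at hmem
      exact hwa.2 hmem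
    have hinj : Set.InjOn w (Finset.range (k + 1)) := by
      intro a ha b hb hab
      simp only [Finset.coe_range, Set.mem_Iio] at ha hb
      rcases lt_trichotomy a b with h | h | h
      · exact absurd hab (hne' a b h (by omega) (by omega))
      · exact h
      · exact absurd hab.symm (hne' b a h (by omega) (by omega))
    have hcard := Finset.card_le_card_of_injOn w
      (fun t ht => (hw t (by
        have := Finset.mem_range.mp ht; omega)).1) hinj
    rw [Finset.card_range] at hcard
    omega
  obtain ⟨t0, ht0T, ht0⟩ := hgood
  have hxt0 : traj.x t0 = xstar := by
    rw [hxchar t0]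
    funext i
    by_cases hi : i ∈ traj.S t0
    · simp [hi]
    · have hxi : xstar i = 0 := by
        by_contra h
        exact hi (ht0 (Finset.mem_filter.mpr ⟨Finset.mem_univ i, h⟩))
      simp [hi, hxi]
  have hzero : l2norm (A.mulVec (traj.x t0) - A.mulVec xstar) = 0 := by
    rw [hxt0]
    simp [l2norm]
  have hb := hbest t0 ht0T
  rw [hzero] at hb
  have hBzero : l2norm (A.mulVec (traj.x tB) - A.mulVec xstar) = 0 :=
    le_antisymm hb (Real.sqrt_nonneg _)
  have hsum0 : ∑ i, (traj.x tB i - xstar i) ^ 2 = 0 := by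
    have hnneg : (0:ℝ) ≤ ∑ j, ((A.mulVec (traj.x tB) - A.mulVec xstar) j) ^ 2 := by positivity
    have h0 : ∑ j, ((A.mulVec (traj.x tB) - A.mulVec xstar) j) ^ 2 = 0 := by
      unfold l2norm at hBzero
      nlinarith [Real.sq_sqrt hnneg]
    rwa [hres] at h0
  have hxB : traj.x tB = xstar := by
    funext i
    have h := (Finset.sum_eq_zero_iff_of_nonneg (fun i _ => sq_nonneg _)).mp hsum0 i
      (Finset.mem_univ i)
    have := sq_eq_zero_iff.mp h
    linarith
  refine ⟨?_, hxB⟩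
  intro i hi
  have hxi : xstar i ≠ 0 := (Finset.mem_filter.mp hi).2
  by_contra hiS
  have := traj.x_supp tB i hiS
  rw [hxB] at this
  exact hxi this

end
end

section
/- Let R, S ⊆ {1,…,n} be disjoint sets of indices and let δ = δ_{|R|+|S|} be the (|R|+|S|)-th restricted isometry constant of A, assumed to satisfy δ < 1. Then for every x ∈ ℝ^{|S|}, ‖A_Rᵀ A_S x‖₂ ≤ δ ‖x‖₂, where A_R and A_S denote the submatrices of A formed by the columns indexed by R and S respectively. -/
noncomputable section
open Finset Matrix

/-- The `l`-th restricted isometry constant of `A`: the smallest `δ ≥ 0` such that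
`(1-δ)‖x‖₂² ≤ ‖Ax‖₂² ≤ (1+δ)‖x‖₂²` for every `x` with at most `l` nonzero entries. -/
def ripConst {m n : ℕ} (A : Matrix (Fin m) (Fin n) ℝ) (l : ℕ) : ℝ :=
  sInf {δ : ℝ | 0 ≤ δ ∧ ∀ x : Fin n → ℝ, (spt x).card ≤ l →
    (1 - δ) * ∑ i, (x i) ^ 2 ≤ ∑ j, (A.mulVec x j) ^ 2 ∧
    ∑ j, (A.mulVec x j) ^ 2 ≤ (1 + δ) * ∑ i, (x i) ^ 2}

/-! The proof works with an arbitrary admissible constant `δ` of `ripConst A l` and passes to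
the infimum only at the end. For `u` supported on `R` and `v` on `S`, the vectors `u ± v` are
`(|R| + |S|)`-sparse with `‖u ± v‖² = ‖u‖² + ‖v‖²`, so polarization gives
`⟪Au, Av⟫ ≤ δ ‖u‖ ‖v‖`. Taking for `u` the restriction `w` of `AᵀAx` to `R` turns the left side
into `‖w‖²`, whence `‖w‖ ≤ δ ‖x‖`. -/

section

variable {m n : ℕ}

def IsRIPBound (A : Matrix (Fin m) (Fin n) ℝ) (l : ℕ) (δ : ℝ) : Prop :=
  0 ≤ δ ∧ ∀ x : Fin n → ℝ, (spt x).card ≤ l →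
    (1 - δ) * ∑ i, (x i) ^ 2 ≤ ∑ j, (A.mulVec x j) ^ 2 ∧
    ∑ j, (A.mulVec x j) ^ 2 ≤ (1 + δ) * ∑ i, (x i) ^ 2

theorem ripConst_eq_sInf (A : Matrix (Fin m) (Fin n) ℝ) (l : ℕ) :
    ripConst A l = sInf {δ | IsRIPBound A l δ} :=
  rfl

theorem l2norm_nonneg (v : Fin n → ℝ) : 0 ≤ l2norm v :=
  Real.sqrt_nonneg _

theorem l2norm_sq (v : Fin n → ℝ) : l2norm v ^ 2 = ∑ i, v i ^ 2 :=
  Real.sq_sqrt (sum_nonneg fun i _ => sq_nonneg (v i))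

theorem l2norm_eq_zero {v : Fin n → ℝ} : l2norm v = 0 ↔ v = 0 := by
  rw [← dotProduct_self_eq_zero, ← sq_eq_zero_iff, l2norm_sq]
  simp only [dotProduct, sq]

theorem l2norm_smul (c : ℝ) (v : Fin n → ℝ) : l2norm (c • v) = |c| * l2norm v := by
  simp only [l2norm, Pi.smul_apply, smul_eq_mul, mul_pow, ← mul_sum]
  rw [Real.sqrt_mul (sq_nonneg c), Real.sqrt_sq_eq_abs]

theorem card_spt_le {v : Fin n → ℝ} {T : Finset (Fin n)} (hv : ∀ i, i ∉ T → v i = 0) :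
    (spt v).card ≤ T.card :=
  card_le_card fun i hi => by_contra fun hiT => (mem_filter.mp hi).2 (hv i hiT)

theorem exists_isRIPBound (A : Matrix (Fin m) (Fin n) ℝ) (l : ℕ) : ∃ δ, IsRIPBound A l δ := by
  set C := ∑ j, ∑ i, A j i ^ 2
  have hC : 0 ≤ C := sum_nonneg fun j _ => sum_nonneg fun i _ => sq_nonneg _
  refine ⟨1 + C, by positivity, fun x _ => ⟨?_, ?_⟩⟩
  · nlinarith [sum_nonneg fun j (_ : j ∈ univ) => sq_nonneg (A.mulVec x j),
      sum_nonneg fun i (_ : i ∈ univ) => sq_nonneg (x i)]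
  · have hCS : ∑ j, (A.mulVec x j) ^ 2 ≤ C * ∑ i, x i ^ 2 := by
      rw [sum_mul]
      exact sum_le_sum fun j _ => sum_mul_sq_le_sq_mul_sq univ (A j) x
    nlinarith [sum_nonneg fun i (_ : i ∈ univ) => sq_nonneg (x i)]

theorem sum_add_sq_sub_sum_sub_sq {ι : Type*} [Fintype ι] (a b : ι → ℝ) :
    ∑ i, (a i + b i) ^ 2 - ∑ i, (a i - b i) ^ 2 = 4 * ∑ i, a i * b i := by
  rw [← sum_sub_distrib, mul_sum]
  exact sum_congr rfl fun i _ => by ring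

theorem sum_add_sq_of_sum_mul_eq_zero {ι : Type*} [Fintype ι] {a b : ι → ℝ}
    (hab : ∑ i, a i * b i = 0) (s : ℝ) :
    ∑ i, (a i + s * b i) ^ 2 = ∑ i, a i ^ 2 + s ^ 2 * ∑ i, b i ^ 2 := by
  have : ∑ i, (a i + s * b i) ^ 2 = ∑ i, (a i ^ 2 + s ^ 2 * b i ^ 2 + 2 * s * (a i * b i)) :=
    sum_congr rfl fun i _ => by ring
  rw [this, sum_add_distrib, sum_add_distrib, ← mul_sum, ← mul_sum, hab, mul_zero, add_zero]

variable {A : Matrix (Fin m) (Fin n) ℝ} {l : ℕ} {δ : ℝ}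

theorem IsRIPBound.nonneg (h : IsRIPBound A l δ) : 0 ≤ δ :=
  h.1

theorem IsRIPBound.two_mul_inner_le (h : IsRIPBound A l δ) {R S : Finset (Fin n)}
    (hRS : Disjoint R S) (hl : R.card + S.card ≤ l) {u v : Fin n → ℝ}
    (hu : ∀ i, i ∉ R → u i = 0) (hv : ∀ i, i ∉ S → v i = 0) :
    2 * (A *ᵥ u) ⬝ᵥ (A *ᵥ v) ≤ δ * (∑ i, u i ^ 2 + ∑ i, v i ^ 2) := by
  have huv : ∑ i, u i * v i = 0 := sum_eq_zero fun i _ => by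
    by_cases hi : i ∈ R
    · rw [hv i (disjoint_left.mp hRS hi), mul_zero]
    · rw [hu i hi, zero_mul]
  have hsparse : ∀ s : ℝ, (spt (u + s • v)).card ≤ l := fun s =>
    calc (spt (u + s • v)).card ≤ (R ∪ S).card := card_spt_le fun i hi => by
          simp only [mem_union, not_or] at hi
          simp [hu i hi.1, hv i hi.2]
      _ ≤ l := (card_union_of_disjoint hRS).trans_le hl
  have hplus := (h.2 _ (hsparse 1)).2
  have hminus := (h.2 _ (hsparse (-1))).1
  simp only [Pi.add_apply, Pi.smul_apply, smul_eq_mul, mulVec_add, mulVec_smul,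
    sum_add_sq_of_sum_mul_eq_zero huv] at hplus hminus
  have hpolar := sum_add_sq_sub_sum_sub_sq (A *ᵥ u) (A *ᵥ v)
  simp only [one_pow, neg_one_sq, one_mul, neg_one_mul, ← sub_eq_add_neg] at hplus hminus
  rw [dotProduct]
  linarith

theorem IsRIPBound.inner_le (h : IsRIPBound A l δ) {R S : Finset (Fin n)}
    (hRS : Disjoint R S) (hl : R.card + S.card ≤ l) {u v : Fin n → ℝ}
    (hu : ∀ i, i ∉ R → u i = 0) (hv : ∀ i, i ∉ S → v i = 0) :
    (A *ᵥ u) ⬝ᵥ (A *ᵥ v) ≤ δ * l2norm u * l2norm v := by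
  have hab : 0 ≤ l2norm u * l2norm v := mul_nonneg (l2norm_nonneg u) (l2norm_nonneg v)
  rcases hab.eq_or_lt with hab | hab
  · rcases mul_eq_zero.mp hab.symm with hu0 | hv0
    · rw [hu0, l2norm_eq_zero.mp hu0]
      simp
    · rw [hv0, l2norm_eq_zero.mp hv0]
      simp
  -- `two_mul_inner_le` is sharp only for `‖u‖ = ‖v‖`; rescale to that case
  have hscaled := h.two_mul_inner_le hRS hl (u := l2norm v • u) (v := l2norm u • v)
    (fun i hi => by simp [hu i hi]) (fun i hi => by simp [hv i hi])
  simp only [← l2norm_sq, l2norm_smul, abs_of_nonneg (l2norm_nonneg _), mulVec_smul,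
    smul_dotProduct, dotProduct_smul, smul_eq_mul] at hscaled
  refine le_of_mul_le_mul_left ?_ hab
  linear_combination hscaled / 2

theorem le_ripConst_mul_of_forall {a b : ℝ} (hb : 0 ≤ b)
    (h : ∀ δ, IsRIPBound A l δ → a ≤ δ * b) : a ≤ ripConst A l * b := by
  obtain ⟨δ₀, hδ₀⟩ := exists_isRIPBound A l
  rcases hb.eq_or_lt with rfl | hb
  · simpa using h δ₀ hδ₀
  rw [← div_le_iff₀ hb, ripConst_eq_sInf]
  exact le_csInf ⟨δ₀, hδ₀⟩ fun δ hδ => (div_le_iff₀ hb).mpr (h δ hδ)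

end

theorem rip_disjoint_cross_bound_general {m n : ℕ}
    (A : Matrix (Fin m) (Fin n) ℝ)
    (R S : Finset (Fin n)) (hRS : Disjoint R S)
    (x : Fin n → ℝ) (hx : ∀ i, i ∉ S → x i = 0) :
    Real.sqrt (∑ i ∈ R, (Aᵀ.mulVec (A.mulVec x) i) ^ 2) ≤
      ripConst A (R.card + S.card) * l2norm x := by
  set y := Aᵀ *ᵥ (A *ᵥ x)
  set w : Fin n → ℝ := fun i => if i ∈ R then y i else 0
  have hwR : ∀ i, i ∉ R → w i = 0 := fun i hi => if_neg hi
  have hnorm : Real.sqrt (∑ i ∈ R, y i ^ 2) = l2norm w := by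
    simp [l2norm, w, ite_pow, sum_ite_mem]
  have hinner : (A *ᵥ w) ⬝ᵥ (A *ᵥ x) = l2norm w ^ 2 := by
    rw [← vecMul_transpose, ← dotProduct_mulVec, l2norm_sq]
    change w ⬝ᵥ y = _
    exact sum_congr rfl fun i _ => by
      by_cases hi : i ∈ R <;> simp only [w, hi, if_true, if_false, sq, zero_mul]
  rw [hnorm]
  refine le_ripConst_mul_of_forall (l2norm_nonneg x) fun δ hδ => ?_
  have hcross := hinner ▸ hδ.inner_le hRS le_rfl hwR hx
  nlinarith [l2norm_nonneg w, mul_nonneg hδ.nonneg (l2norm_nonneg x)]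

/-- RIP Fact 2: for disjoint index sets `R, S` and any `x` supported in `S`,
`‖A_Rᵀ A_S x‖₂ ≤ δ_{|R|+|S|} ‖x‖₂`. -/
theorem rip_disjoint_cross_bound {m n : ℕ} (hm : 0 < m) (hn : 0 < n)
    (A : Matrix (Fin m) (Fin n) ℝ)
    (R S : Finset (Fin n)) (hRS : Disjoint R S)
    (hδ : ripConst A (R.card + S.card) < 1)
    (x : Fin n → ℝ) (hx : ∀ i, i ∉ S → x i = 0) :
    Real.sqrt (∑ i ∈ R, (Aᵀ.mulVec (A.mulVec x) i) ^ 2) ≤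
      ripConst A (R.card + S.card) * l2norm x :=
  rip_disjoint_cross_bound_general A R S hRS x hx

end
end

section
/- Assume 2k + 1 ≤ n, A satisfies the (2k+1)-RIP (δ_{2k+1} < 1), and every column of A has unit Euclidean norm. Then for every SEA trajectory and every t ≥ 0, ‖u^t/η − Aᵀ(A x^t − y)‖_∞ ≤ α_k^RIP ‖x*‖₂ + γ_k^RIP ‖e‖₂; equivalently, (1/η)‖b^t‖_∞ ≤ α_k^RIP ‖x*‖₂ + γ_k^RIP ‖e‖₂. -/
noncomputable section
open Finset Matrix

/-- `α_k^RIP = δ_{2k+1} (1 + δ_{2k} / (1 - δ_k))`. -/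
def alphaRIP {m n : ℕ} (A : Matrix (Fin m) (Fin n) ℝ) (k : ℕ) : ℝ :=
  ripConst A (2 * k + 1) * (1 + ripConst A (2 * k) / (1 - ripConst A k))

/-- `γ_k^RIP = 1 + δ_{2k+1} √(1+δ_k) / (1 - δ_k)`. -/
def gammaRIP {m n : ℕ} (A : Matrix (Fin m) (Fin n) ℝ) (k : ℕ) : ℝ :=
  1 + ripConst A (2 * k + 1) * Real.sqrt (1 + ripConst A k) / (1 - ripConst A k)

namespace SEAux

def ripP {m n : ℕ} (A : Matrix (Fin m) (Fin n) ℝ) (l : ℕ) (δ : ℝ) : Prop :=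
  0 ≤ δ ∧ ∀ x : Fin n → ℝ, (spt x).card ≤ l →
    (1 - δ) * ∑ i, (x i) ^ 2 ≤ ∑ j, (A.mulVec x j) ^ 2 ∧
    ∑ j, (A.mulVec x j) ^ 2 ≤ (1 + δ) * ∑ i, (x i) ^ 2

lemma ripConst_def {m n : ℕ} (A : Matrix (Fin m) (Fin n) ℝ) (l : ℕ) :
    ripConst A l = sInf {δ | ripP A l δ} := rfl

variable {m n : ℕ}

lemma sum_sq_nonneg {d : ℕ} (x : Fin d → ℝ) : (0:ℝ) ≤ ∑ i, (x i)^2 :=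
  Finset.sum_nonneg fun i _ => sq_nonneg _

lemma spt_subset {d : ℕ} {x : Fin d → ℝ} {s : Finset (Fin d)}
    (h : ∀ i, i ∉ s → x i = 0) : spt x ⊆ s := by
  intro i hi
  simp only [spt, Finset.mem_filter] at hi
  by_contra hc
  exact hi.2 (h i hc)

lemma abs_dot_le {d : ℕ} (u v : Fin d → ℝ) :
    |∑ i, u i * v i| ≤ Real.sqrt (∑ i, (u i)^2) * Real.sqrt (∑ i, (v i)^2) := by
  have h := Finset.sum_mul_sq_le_sq_mul_sq Finset.univ u v
  rw [← Real.sqrt_sq_eq_abs, ← Real.sqrt_mul (sum_sq_nonneg u)]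
  exact Real.sqrt_le_sqrt h

lemma ripP_top (A : Matrix (Fin m) (Fin n) ℝ)
    (hcols : ∀ j : Fin n, ∑ i, (A i j)^2 = 1) (l : ℕ) :
    ripP A l ((n:ℝ)+1) := by
  refine ⟨by positivity, fun x _ => ?_⟩
  have hQ : ∑ j, (A.mulVec x j)^2 ≤ (n:ℝ) * ∑ i, (x i)^2 := by
    calc ∑ j, (A.mulVec x j)^2
        ≤ ∑ j, ((∑ i, (A j i)^2) * ∑ i, (x i)^2) := by
          refine Finset.sum_le_sum fun j _ => ?_
          simpa [Matrix.mulVec, dotProduct] using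
            Finset.sum_mul_sq_le_sq_mul_sq Finset.univ (fun i => A j i) x
      _ = (∑ j, ∑ i, (A j i)^2) * ∑ i, (x i)^2 := by rw [Finset.sum_mul]
      _ = (∑ i : Fin n, ∑ j, (A j i)^2) * ∑ i, (x i)^2 := by rw [Finset.sum_comm]
      _ = (n:ℝ) * ∑ i, (x i)^2 := by simp [hcols]
  have hT := sum_sq_nonneg x
  have hQ0 := sum_sq_nonneg (A.mulVec x)
  constructor <;> nlinarith

lemma ripSet_nonempty (A : Matrix (Fin m) (Fin n) ℝ)
    (hcols : ∀ j : Fin n, ∑ i, (A i j)^2 = 1) (l : ℕ) :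
    Set.Nonempty {δ | ripP A l δ} := ⟨_, ripP_top A hcols l⟩

lemma ripP_ripConst (A : Matrix (Fin m) (Fin n) ℝ)
    (hcols : ∀ j : Fin n, ∑ i, (A i j)^2 = 1) (l : ℕ) :
    ripP A l (ripConst A l) := by
  have hne := ripSet_nonempty A hcols l
  have hbdd : BddBelow {δ | ripP A l δ} := ⟨0, fun δ hδ => hδ.1⟩
  rw [ripConst_def]
  constructor
  · exact le_csInf hne fun δ hδ => hδ.1
  intro x hx
  set T := ∑ i, (x i)^2 with hTdef
  set Q := ∑ j, (A.mulVec x j)^2 with hQdef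
  have hT : 0 ≤ T := sum_sq_nonneg x
  have key : ∀ ε : ℝ, 0 < ε → (1 - sInf {δ | ripP A l δ}) * T ≤ Q + ε ∧
      Q ≤ (1 + sInf {δ | ripP A l δ}) * T + ε := by
    intro ε hε
    have hε' : 0 < ε / (T + 1) := by positivity
    obtain ⟨δ, hδ, hlt⟩ := Real.lt_sInf_add_pos hne hε'
    obtain ⟨h1, h2⟩ := hδ.2 x hx
    have hdiv : ε / (T + 1) * T ≤ ε := by
      rw [div_mul_eq_mul_div, div_le_iff₀ (by linarith)]
      nlinarith
    constructor
    · nlinarith [mul_le_mul_of_nonneg_right (le_of_lt hlt) hT]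
    · nlinarith [mul_le_mul_of_nonneg_right (le_of_lt hlt) hT]
  constructor
  · have : ∀ ε : ℝ, 0 < ε → (1 - sInf {δ | ripP A l δ}) * T ≤ Q + ε :=
      fun ε hε => (key ε hε).1
    linarith [le_of_forall_pos_le_add this]
  · have : ∀ ε : ℝ, 0 < ε → Q ≤ (1 + sInf {δ | ripP A l δ}) * T + ε :=
      fun ε hε => (key ε hε).2
    linarith [le_of_forall_pos_le_add this]

lemma ripConst_mono (A : Matrix (Fin m) (Fin n) ℝ)
    (hcols : ∀ j : Fin n, ∑ i, (A i j)^2 = 1) {l l' : ℕ} (h : l ≤ l') :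
    ripConst A l ≤ ripConst A l' := by
  rw [ripConst_def, ripConst_def]
  exact csInf_le_csInf ⟨0, fun δ hδ => hδ.1⟩ (ripSet_nonempty A hcols l')
    (fun δ hδ => ⟨hδ.1, fun x hx => hδ.2 x (le_trans hx h)⟩)

lemma spt_add_subset {d : ℕ} (u v : Fin d → ℝ) : spt (u + v) ⊆ spt u ∪ spt v := by
  intro i hi
  simp only [spt, Finset.mem_filter, Finset.mem_union, Finset.mem_univ, true_and,
    Pi.add_apply] at *
  by_contra h
  push_neg at h
  exact hi (by rw [h.1, h.2]; ring)

lemma spt_sub_subset {d : ℕ} (u v : Fin d → ℝ) : spt (u - v) ⊆ spt u ∪ spt v := by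
  intro i hi
  simp only [spt, Finset.mem_filter, Finset.mem_union, Finset.mem_univ, true_and,
    Pi.sub_apply] at *
  by_contra h
  push_neg at h
  exact hi (by rw [h.1, h.2]; ring)

lemma spt_smul_subset {d : ℕ} (c : ℝ) (u : Fin d → ℝ) : spt (c • u) ⊆ spt u := by
  intro i hi
  simp only [spt, Finset.mem_filter, Finset.mem_univ, true_and, Pi.smul_apply,
    smul_eq_mul] at *
  intro h
  exact hi (by rw [h]; ring)

lemma sqrt_add_le' (a b : ℝ) (ha : 0 ≤ a) (hb : 0 ≤ b) :
    Real.sqrt (a + b) ≤ Real.sqrt a + Real.sqrt b := by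
  have h : a + b ≤ (Real.sqrt a + Real.sqrt b)^2 := by
    have h1 := Real.sq_sqrt ha
    have h2 := Real.sq_sqrt hb
    nlinarith [Real.sqrt_nonneg a, Real.sqrt_nonneg b,
      mul_nonneg (Real.sqrt_nonneg a) (Real.sqrt_nonneg b)]
  calc Real.sqrt (a + b) ≤ Real.sqrt ((Real.sqrt a + Real.sqrt b)^2) := Real.sqrt_le_sqrt h
    _ = Real.sqrt a + Real.sqrt b := Real.sqrt_sq (by positivity)

lemma rip_inner_half (A : Matrix (Fin m) (Fin n) ℝ)
    (hcols : ∀ j : Fin n, ∑ i, (A i j)^2 = 1) (l : ℕ) {u v : Fin n → ℝ}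
    (hc : (spt u ∪ spt v).card ≤ l) :
    |(∑ i, A.mulVec u i * A.mulVec v i) - ∑ i, u i * v i| ≤
      ripConst A l / 2 * ((∑ i, (u i)^2) + (∑ i, (v i)^2)) := by
  obtain ⟨hδ0, hspec⟩ := ripP_ripConst A hcols l
  set δ := ripConst A l with hδdef
  have hcard1 : (spt (u + v)).card ≤ l :=
    le_trans (Finset.card_le_card (spt_add_subset u v)) hc
  have hcard2 : (spt (u - v)).card ≤ l :=
    le_trans (Finset.card_le_card (spt_sub_subset u v)) hc
  obtain ⟨h1l, h1r⟩ := hspec (u + v) hcard1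
  obtain ⟨h2l, h2r⟩ := hspec (u - v) hcard2
  have eQ1 : ∑ j, (A.mulVec (u + v) j)^2 =
      ∑ j, (A.mulVec u j)^2 + 2 * (∑ j, A.mulVec u j * A.mulVec v j)
        + ∑ j, (A.mulVec v j)^2 := by
    simp only [Matrix.mulVec_add, Pi.add_apply]
    rw [Finset.mul_sum, ← Finset.sum_add_distrib, ← Finset.sum_add_distrib]
    exact Finset.sum_congr rfl fun j _ => by ring
  have eQ2 : ∑ j, (A.mulVec (u - v) j)^2 =
      ∑ j, (A.mulVec u j)^2 - 2 * (∑ j, A.mulVec u j * A.mulVec v j)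
        + ∑ j, (A.mulVec v j)^2 := by
    simp only [Matrix.mulVec_sub, Pi.sub_apply]
    rw [Finset.mul_sum, ← Finset.sum_sub_distrib, ← Finset.sum_add_distrib]
    exact Finset.sum_congr rfl fun j _ => by ring
  have eT1 : ∑ i, ((u + v) i)^2 =
      ∑ i, (u i)^2 + 2 * (∑ i, u i * v i) + ∑ i, (v i)^2 := by
    simp only [Pi.add_apply]
    rw [Finset.mul_sum, ← Finset.sum_add_distrib, ← Finset.sum_add_distrib]
    exact Finset.sum_congr rfl fun i _ => by ring
  have eT2 : ∑ i, ((u - v) i)^2 =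
      ∑ i, (u i)^2 - 2 * (∑ i, u i * v i) + ∑ i, (v i)^2 := by
    simp only [Pi.sub_apply]
    rw [Finset.mul_sum, ← Finset.sum_sub_distrib, ← Finset.sum_add_distrib]
    exact Finset.sum_congr rfl fun i _ => by ring
  rw [eQ1, eT1] at h1l h1r
  rw [eQ2, eT2] at h2l h2r
  rw [abs_le]
  constructor <;> nlinarith [sum_sq_nonneg u, sum_sq_nonneg v]

lemma rip_inner (A : Matrix (Fin m) (Fin n) ℝ)
    (hcols : ∀ j : Fin n, ∑ i, (A i j)^2 = 1) (l : ℕ) {u v : Fin n → ℝ}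
    (hc : (spt u ∪ spt v).card ≤ l) :
    |(∑ i, A.mulVec u i * A.mulVec v i) - ∑ i, u i * v i| ≤
      ripConst A l * (l2norm u * l2norm v) := by
  have hδ0 := (ripP_ripConst A hcols l).1
  by_cases hu : ∑ i, (u i)^2 = 0
  · have hu0 : u = 0 := by
      funext i
      have := (Finset.sum_eq_zero_iff_of_nonneg (fun i _ => sq_nonneg (u i))).mp hu i
        (Finset.mem_univ i)
      exact pow_eq_zero_iff (by norm_num) |>.mp this
    subst hu0
    simp [l2norm, Matrix.mulVec_zero]
  by_cases hv : ∑ i, (v i)^2 = 0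
  · have hv0 : v = 0 := by
      funext i
      have := (Finset.sum_eq_zero_iff_of_nonneg (fun i _ => sq_nonneg (v i))).mp hv i
        (Finset.mem_univ i)
      exact pow_eq_zero_iff (by norm_num) |>.mp this
    subst hv0
    simp [l2norm, Matrix.mulVec_zero]
  have hTu : 0 < ∑ i, (u i)^2 := lt_of_le_of_ne (sum_sq_nonneg u) (Ne.symm hu)
  have hTv : 0 < ∑ i, (v i)^2 := lt_of_le_of_ne (sum_sq_nonneg v) (Ne.symm hv)
  set a := Real.sqrt (∑ i, (u i)^2) with hadef
  set b := Real.sqrt (∑ i, (v i)^2) with hbdef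
  have ha : 0 < a := Real.sqrt_pos.mpr hTu
  have hb : 0 < b := Real.sqrt_pos.mpr hTv
  have ha2 : a^2 = ∑ i, (u i)^2 := Real.sq_sqrt (le_of_lt hTu)
  have hb2 : b^2 = ∑ i, (v i)^2 := Real.sq_sqrt (le_of_lt hTv)
  set s := Real.sqrt (b / a) with hsdef
  have hs : 0 < s := Real.sqrt_pos.mpr (by positivity)
  have hs2 : s^2 = b / a := Real.sq_sqrt (by positivity)
  -- apply half lemma to s • u and s⁻¹ • v
  have hcard : (spt (s • u) ∪ spt (s⁻¹ • v)).card ≤ l := by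
    refine le_trans (Finset.card_le_card (Finset.union_subset_union
      (spt_smul_subset s u) (spt_smul_subset s⁻¹ v))) hc
  have H := rip_inner_half A hcols l hcard
  have eX : ∑ i, A.mulVec (s • u) i * A.mulVec (s⁻¹ • v) i
      = ∑ i, A.mulVec u i * A.mulVec v i := by
    simp only [Matrix.mulVec_smul, Pi.smul_apply, smul_eq_mul]
    have hsne : s ≠ 0 := ne_of_gt hs
    exact Finset.sum_congr rfl fun i _ => by field_simp
  have eY : ∑ i, (s • u) i * (s⁻¹ • v) i = ∑ i, u i * v i := by
    simp only [Pi.smul_apply, smul_eq_mul]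
    have hsne : s ≠ 0 := ne_of_gt hs
    exact Finset.sum_congr rfl fun i _ => by field_simp
  have eTu : ∑ i, ((s • u) i)^2 = a * b := by
    simp only [Pi.smul_apply, smul_eq_mul]
    have : ∑ i, (s * u i)^2 = s^2 * ∑ i, (u i)^2 := by
      rw [Finset.mul_sum]; exact Finset.sum_congr rfl fun i _ => by ring
    rw [this, hs2, ← ha2]
    field_simp
  have eTv : ∑ i, ((s⁻¹ • v) i)^2 = a * b := by
    simp only [Pi.smul_apply, smul_eq_mul]
    have : ∑ i, (s⁻¹ * v i)^2 = (s^2)⁻¹ * ∑ i, (v i)^2 := by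
      rw [Finset.mul_sum]; exact Finset.sum_congr rfl fun i _ => by ring
    rw [this, hs2, ← hb2]
    field_simp
  rw [eX, eY, eTu, eTv] at H
  unfold l2norm
  rw [← hadef, ← hbdef]
  calc |(∑ i, A.mulVec u i * A.mulVec v i) - ∑ i, u i * v i|
      ≤ ripConst A l / 2 * (a * b + a * b) := H
    _ = ripConst A l * (a * b) := by ring

lemma mulVec_l2_le (A : Matrix (Fin m) (Fin n) ℝ)
    (hcols : ∀ j : Fin n, ∑ i, (A i j)^2 = 1) (l : ℕ) {w : Fin n → ℝ}
    (hw : (spt w).card ≤ l) :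
    Real.sqrt (∑ j, (A.mulVec w j)^2) ≤ Real.sqrt (1 + ripConst A l) * l2norm w := by
  obtain ⟨hδ0, hspec⟩ := ripP_ripConst A hcols l
  rw [l2norm, ← Real.sqrt_mul (by linarith : (0:ℝ) ≤ 1 + ripConst A l)]
  exact Real.sqrt_le_sqrt (hspec w hw).2


lemma quad_zero {c q : ℝ} (hq : 0 ≤ q) (key : ∀ s : ℝ, 0 ≤ 2*s*c + s^2*q) : c = 0 := by
  rcases eq_or_lt_of_le hq with hq0 | hq0
  · have h1 := key (-c)
    have h2 : c^2 ≤ 0 := by nlinarith [sq_nonneg c]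
    have h3 : c^2 = 0 := le_antisymm h2 (sq_nonneg c)
    exact pow_eq_zero_iff (by norm_num) |>.mp h3
  · have h2 := key (-c/q)
    have hne : q ≠ 0 := ne_of_gt hq0
    have he : 2*(-c/q)*c + (-c/q)^2*q = -c^2/q := by field_simp; ring
    rw [he] at h2
    have h3 := mul_nonneg h2 (le_of_lt hq0)
    rw [div_mul_cancel₀ _ hne] at h3
    have h4 : c^2 = 0 := le_antisymm (by linarith) (sq_nonneg c)
    exact pow_eq_zero_iff (by norm_num) |>.mp h4

lemma l2norm_nonneg {d : ℕ} (v : Fin d → ℝ) : 0 ≤ l2norm v := Real.sqrt_nonneg _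

lemma l2norm_sq {d : ℕ} (v : Fin d → ℝ) : (l2norm v)^2 = ∑ i, (v i)^2 :=
  Real.sq_sqrt (sum_sq_nonneg v)

lemma final_arith {δ1 δ2 δ3 s1 nw nxb nh nx ne' : ℝ}
    (hδ20 : 0 ≤ δ2) (hδ30 : 0 ≤ δ3) (hc1 : 0 < 1 - δ1) (hs10 : 0 ≤ s1)
    (hnx0 : 0 ≤ nx) (hne0 : 0 ≤ ne') (hnxb0 : 0 ≤ nxb) (hnw0 : 0 ≤ nw)
    (hnw : (1-δ1) * nw ≤ δ2*nxb + s1*ne')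
    (hnh : nh ≤ nw + nxb) (hxbx : nxb ≤ nx) :
    δ3 * nh + ne' ≤ (δ3*(1+δ2/(1-δ1)))*nx + (1+δ3*s1/(1-δ1))*ne' := by
  have hnw1 : nw ≤ (δ2*nxb + s1*ne')/(1-δ1) := by
    rw [le_div_iff₀ hc1]
    nlinarith
  have hmono : (δ2*nxb + s1*ne')/(1-δ1) ≤ (δ2*nx + s1*ne')/(1-δ1) := by gcongr
  have hnh2 : nh ≤ nx + (δ2*nx + s1*ne')/(1-δ1) := by linarith
  have key2 : δ3 * nh ≤ δ3*nx + (δ3*δ2*nx + δ3*s1*ne')/(1-δ1) :=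
    calc δ3 * nh ≤ δ3 * (nx + (δ2*nx + s1*ne')/(1-δ1)) :=
          mul_le_mul_of_nonneg_left hnh2 hδ30
      _ = δ3*nx + (δ3*δ2*nx + δ3*s1*ne')/(1-δ1) := by
          field_simp
  have hrhs : (δ3*(1+δ2/(1-δ1)))*nx + (1+δ3*s1/(1-δ1))*ne'
      = δ3*nx + (δ3*δ2*nx + δ3*s1*ne')/(1-δ1) + ne' := by
    field_simp
    ring
  rw [hrhs]
  linarith

end SEAux

set_option maxHeartbeats 1600000

/-- Bound of the gradient noise in the RIP case:
`‖u^t/η − Aᵀ(A x^t − y)‖_∞ = (1/η)‖b^t‖_∞ ≤ α_k^RIP ‖x*‖₂ + γ_k^RIP ‖e‖₂`. -/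
theorem sea_gradient_noise_bound_RIP {m n k : ℕ} (hm : 0 < m) (hk : 0 < k)
    (hkn : 2 * k + 1 ≤ n)
    (A : Matrix (Fin m) (Fin n) ℝ) (hRIP : ripConst A (2 * k + 1) < 1)
    (hcols : ∀ j : Fin n, ∑ i, (A i j) ^ 2 = 1)
    (xstar : Fin n → ℝ) (hspars : (spt xstar).card ≤ k) (hne : (spt xstar).Nonempty)
    (e : Fin m → ℝ) (y : Fin m → ℝ) (hy : y = A.mulVec xstar + e)
    (η : ℝ) (hη : 0 < η) (X0 : Fin n → ℝ)
    (traj : SEATraj k A y η X0) :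
    ∀ t : ℕ,
      supNorm (fun i => oracleUpd xstar η (traj.S t) i / η -
          Aᵀ.mulVec (A.mulVec (traj.x t) - y) i) ≤
        alphaRIP A k * l2norm xstar + gammaRIP A k * l2norm e ∧
      (1 / η) * supNorm (gradNoise A y xstar η (traj.S t) (traj.x t)) ≤
        alphaRIP A k * l2norm xstar + gammaRIP A k * l2norm e := by
  intro t
  classical
  obtain ⟨hδ10, hspec1⟩ := SEAux.ripP_ripConst A hcols k
  obtain ⟨hδ20, hspec2⟩ := SEAux.ripP_ripConst A hcols (2*k)
  obtain ⟨hδ30, hspec3⟩ := SEAux.ripP_ripConst A hcols (2*k+1)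
  set δ1 := ripConst A k with hδ1def
  set δ2 := ripConst A (2*k) with hδ2def
  set δ3 := ripConst A (2*k+1) with hδ3def
  have hδ13 : δ1 ≤ δ3 := SEAux.ripConst_mono A hcols (by omega)
  have hδ1lt : δ1 < 1 := lt_of_le_of_lt hδ13 hRIP
  have hc1 : (0:ℝ) < 1 - δ1 := by linarith
  set S := traj.S t with hSdef
  set xt := traj.x t with hxtdef
  set w : Fin n → ℝ := fun i => if i ∈ S then xt i - xstar i else 0 with hwdef
  set xb : Fin n → ℝ := fun i => if i ∈ S then 0 else xstar i with hxbdef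
  set hh : Fin n → ℝ := xt - xstar with hhdef
  have hxsupp : ∀ i, i ∉ S → xt i = 0 := fun i hi => traj.x_supp t i hi
  have hxmin : ∀ z : Fin n → ℝ, (∀ i, i ∉ S → z i = 0) →
      l2norm (A.mulVec xt - y) ≤ l2norm (A.mulVec z - y) := fun z hz => traj.x_min t z hz
  have hhw : hh = w - xb := by
    funext i
    by_cases hi : i ∈ S
    · simp [hhdef, hwdef, hxbdef, hi]
    · simp [hhdef, hwdef, hxbdef, hi, hxsupp i hi]
  -- supports and cardinalities
  have hw_spt : spt w ⊆ S := SEAux.spt_subset fun i hi => by simp [hwdef, hi]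
  have hxb_spt : spt xb ⊆ spt xstar := by
    intro i hi
    simp only [spt, Finset.mem_filter, Finset.mem_univ, true_and] at hi ⊢
    by_cases hS : i ∈ S
    · simp [hxbdef, hS] at hi
    · simpa [hxbdef, hS] using hi
  have hh_spt : spt hh ⊆ S ∪ spt xstar := by
    intro i hi
    simp only [spt, Finset.mem_filter, Finset.mem_univ, true_and, hhdef,
      Pi.sub_apply] at hi
    by_contra hmem
    simp only [Finset.mem_union, spt, Finset.mem_filter, Finset.mem_univ, true_and,
      not_or, not_not] at hmem
    exact hi (by rw [hxsupp i hmem.1, hmem.2]; ring)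
  have hcardS : S.card = k := traj.card_S t
  have hw_card : (spt w).card ≤ k := hcardS ▸ Finset.card_le_card hw_spt
  have hxb_card : (spt xb).card ≤ k := le_trans (Finset.card_le_card hxb_spt) hspars
  have hSx_card : (S ∪ spt xstar).card ≤ 2*k := by
    calc (S ∪ spt xstar).card ≤ S.card + (spt xstar).card := Finset.card_union_le _ _
      _ ≤ 2*k := by omega
  have hh_card : (spt hh).card ≤ 2*k := le_trans (Finset.card_le_card hh_spt) hSx_card
  -- least-squares orthogonality
  have ortho : ∀ z : Fin n → ℝ, (∀ i, i ∉ S → z i = 0) →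
      ∑ j, A.mulVec z j * (A.mulVec xt - y) j = 0 := by
    intro z hz
    refine SEAux.quad_zero (SEAux.sum_sq_nonneg (A.mulVec z)) ?_
    intro s
    have hzz : ∀ i, i ∉ S → (xt + s • z) i = 0 := fun i hi => by
      simp [hxsupp i hi, hz i hi]
    have hmin := hxmin (xt + s • z) hzz
    unfold l2norm at hmin
    have hA := SEAux.sum_sq_nonneg (A.mulVec xt - y)
    have hB := SEAux.sum_sq_nonneg (A.mulVec (xt + s • z) - y)
    have hsq : ∑ j, ((A.mulVec xt - y) j)^2 ≤ ∑ j, ((A.mulVec (xt + s • z) - y) j)^2 := by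
      have := pow_le_pow_left₀ (Real.sqrt_nonneg _) hmin 2
      rwa [Real.sq_sqrt hA, Real.sq_sqrt hB] at this
    have hexp : ∑ j, ((A.mulVec (xt + s • z) - y) j)^2
        = ∑ j, ((A.mulVec xt - y) j)^2
          + 2*s*(∑ j, A.mulVec z j * (A.mulVec xt - y) j)
          + s^2*(∑ j, (A.mulVec z j)^2) := by
      simp only [Matrix.mulVec_add, Matrix.mulVec_smul, Pi.add_apply, Pi.sub_apply,
        Pi.smul_apply, smul_eq_mul]
      rw [Finset.mul_sum, Finset.mul_sum, ← Finset.sum_add_distrib, ← Finset.sum_add_distrib]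
      exact Finset.sum_congr rfl fun j _ => by ring
    linarith
  -- residual identity
  have hres : A.mulVec xt - y = A.mulVec hh - e := by
    rw [hy, hhdef, Matrix.mulVec_sub]
    abel
  -- key energy identity for w
  have horth := ortho w (fun i hi => by simp [hwdef, hi])
  have hAwh : ∑ j, A.mulVec w j * A.mulVec hh j = ∑ j, A.mulVec w j * e j := by
    have hsplit : ∑ j, A.mulVec w j * A.mulVec hh j
        = ∑ j, A.mulVec w j * (A.mulVec xt - y) j + ∑ j, A.mulVec w j * e j := by
      rw [hres, ← Finset.sum_add_distrib]
      exact Finset.sum_congr rfl fun j _ => by simp only [Pi.sub_apply]; ring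
    rw [hsplit, horth, zero_add]
  have hAhh_split : ∑ j, A.mulVec w j * A.mulVec hh j
      = ∑ j, (A.mulVec w j)^2 - ∑ j, A.mulVec w j * A.mulVec xb j := by
    rw [hhw, Matrix.mulVec_sub, ← Finset.sum_sub_distrib]
    exact Finset.sum_congr rfl fun j _ => by simp only [Pi.sub_apply]; ring
  -- RIP bounds
  have hQw : (1 - δ1) * ∑ i, (w i)^2 ≤ ∑ j, (A.mulVec w j)^2 := (hspec1 w hw_card).1
  have hinner2 := SEAux.rip_inner A hcols (2*k) (le_trans (Finset.card_le_card
    (Finset.union_subset_union hw_spt hxb_spt)) hSx_card)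
  have hwxb0 : ∑ i, w i * xb i = 0 := by
    apply Finset.sum_eq_zero; intro i _
    by_cases hi : i ∈ S <;> simp [hwdef, hxbdef, hi]
  rw [hwxb0, sub_zero] at hinner2
  have hAwe : |∑ j, A.mulVec w j * e j| ≤ Real.sqrt (1+δ1) * (l2norm w * l2norm e) := by
    calc |∑ j, A.mulVec w j * e j|
        ≤ Real.sqrt (∑ j, (A.mulVec w j)^2) * Real.sqrt (∑ j, (e j)^2) :=
          SEAux.abs_dot_le _ _
      _ ≤ (Real.sqrt (1+δ1) * l2norm w) * Real.sqrt (∑ j, (e j)^2) :=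
          mul_le_mul_of_nonneg_right (SEAux.mulVec_l2_le A hcols k hw_card)
            (Real.sqrt_nonneg _)
      _ = Real.sqrt (1+δ1) * (l2norm w * l2norm e) := by unfold l2norm; ring
  have hmain : (1-δ1) * (l2norm w)^2
      ≤ δ2 * (l2norm w * l2norm xb) + Real.sqrt (1+δ1) * (l2norm w * l2norm e) := by
    have e1 : ∑ j, (A.mulVec w j)^2
        = ∑ j, A.mulVec w j * e j + ∑ j, A.mulVec w j * A.mulVec xb j := by
      linear_combination hAwh - hAhh_split
    have h2 : ∑ j, A.mulVec w j * A.mulVec xb j ≤ δ2 * (l2norm w * l2norm xb) :=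
      le_trans (le_abs_self _) hinner2
    have h3 : ∑ j, A.mulVec w j * e j ≤ Real.sqrt (1+δ1) * (l2norm w * l2norm e) :=
      le_trans (le_abs_self _) hAwe
    rw [SEAux.l2norm_sq]
    linarith
  have hnw : (1-δ1) * l2norm w ≤ δ2 * l2norm xb + Real.sqrt (1+δ1) * l2norm e := by
    have hnw0 : 0 ≤ l2norm w := SEAux.l2norm_nonneg w
    rcases eq_or_lt_of_le hnw0 with h0 | h0
    · rw [← h0]
      have := SEAux.l2norm_nonneg xb
      have := SEAux.l2norm_nonneg e
      have : (0:ℝ) ≤ Real.sqrt (1+δ1) := Real.sqrt_nonneg _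
      nlinarith
    · nlinarith [hmain, h0]
  -- norm of hh
  have hTh : ∑ i, (hh i)^2 = ∑ i, (w i)^2 + ∑ i, (xb i)^2 := by
    rw [← Finset.sum_add_distrib]
    refine Finset.sum_congr rfl fun i _ => ?_
    by_cases hi : i ∈ S
    · simp [hhw, hwdef, hxbdef, hi]
    · simp [hhw, hwdef, hxbdef, hi]
  have hnh : l2norm hh ≤ l2norm w + l2norm xb := by
    unfold l2norm
    rw [hTh]
    exact SEAux.sqrt_add_le' _ _ (SEAux.sum_sq_nonneg w) (SEAux.sum_sq_nonneg xb)
  have hxbx : l2norm xb ≤ l2norm xstar := by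
    unfold l2norm
    apply Real.sqrt_le_sqrt
    apply Finset.sum_le_sum
    intro i _
    by_cases hi : i ∈ S
    · simp [hxbdef, hi, sq_nonneg]
    · simp [hxbdef, hi]
  -- nonnegativity of RHS
  have halpha : alphaRIP A k = δ3 * (1 + δ2/(1-δ1)) := rfl
  have hgamma : gammaRIP A k = 1 + δ3 * Real.sqrt (1+δ1) / (1-δ1) := rfl
  have hs10 : (0:ℝ) ≤ Real.sqrt (1+δ1) := Real.sqrt_nonneg _
  have hα0 : 0 ≤ alphaRIP A k := by
    rw [halpha]
    have h := div_nonneg hδ20 (le_of_lt hc1)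
    exact mul_nonneg hδ30 (by linarith)
  have hγ0 : 0 ≤ gammaRIP A k := by
    rw [hgamma]
    have : 0 ≤ δ3 * Real.sqrt (1+δ1) / (1-δ1) :=
      div_nonneg (mul_nonneg hδ30 hs10) (le_of_lt hc1)
    linarith
  have hRHS0 : 0 ≤ alphaRIP A k * l2norm xstar + gammaRIP A k * l2norm e :=
    add_nonneg (mul_nonneg hα0 (SEAux.l2norm_nonneg xstar))
      (mul_nonneg hγ0 (SEAux.l2norm_nonneg e))
  -- column expression
  have hAt' : ∀ (r : Fin m → ℝ) (i : Fin n), Aᵀ.mulVec r i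
      = ∑ j, A.mulVec (Pi.single i (1:ℝ)) j * r j := by
    intro r i
    rw [Matrix.mulVec_single]
    simp [Matrix.mulVec, dotProduct, Matrix.transpose_apply]
  have hAt : ∀ i : Fin n, Aᵀ.mulVec (A.mulVec xt - y) i
      = ∑ j, A.mulVec (Pi.single i (1:ℝ)) j * (A.mulVec xt - y) j :=
    fun i => hAt' (A.mulVec xt - y) i
  -- pointwise claim
  have claim : ∀ i : Fin n, |oracleUpd xstar η S i / η - Aᵀ.mulVec (A.mulVec xt - y) i|
      ≤ alphaRIP A k * l2norm xstar + gammaRIP A k * l2norm e := by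
    intro i
    by_cases hiS : i ∈ S
    · have h1 : oracleUpd xstar η S i = 0 := by simp [oracleUpd, hiS]
      have h2 : Aᵀ.mulVec (A.mulVec xt - y) i = 0 := by
        rw [hAt i]
        exact ortho (Pi.single i (1:ℝ))
          (fun j hj => Pi.single_eq_of_ne (fun h => hj (by rw [h]; exact hiS)) 1)
      rw [h1, h2]
      simpa using hRHS0
    · have hu : oracleUpd xstar η S i / η = -xstar i := by
        by_cases hx0 : xstar i = 0
        · simp [oracleUpd, hx0]
        · simp only [oracleUpd, if_pos (show xstar i ≠ 0 ∧ i ∉ S from ⟨hx0, hiS⟩)]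
          field_simp
      have hsingle : ∑ j, (Pi.single i (1:ℝ) : Fin n → ℝ) j * hh j = hh i := by
        simp [Pi.single_apply]
      have hhi : hh i = -xstar i := by
        simp [hhdef, hxsupp i hiS]
      have hval : oracleUpd xstar η S i / η - Aᵀ.mulVec (A.mulVec xt - y) i
          = (∑ j, (Pi.single i (1:ℝ) : Fin n → ℝ) j * hh j
              - ∑ j, A.mulVec (Pi.single i (1:ℝ)) j * A.mulVec hh j)
            + ∑ j, A.mulVec (Pi.single i (1:ℝ)) j * e j := by
        rw [hu, hAt i, hres]
        have hsum : ∑ j, A.mulVec (Pi.single i (1:ℝ)) j * (A.mulVec hh - e) j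
            = ∑ j, A.mulVec (Pi.single i (1:ℝ)) j * A.mulVec hh j
              - ∑ j, A.mulVec (Pi.single i (1:ℝ)) j * e j := by
          rw [← Finset.sum_sub_distrib]
          exact Finset.sum_congr rfl fun j _ => by simp only [Pi.sub_apply]; ring
        rw [hsum, hsingle, hhi]
        ring
      have hcard3 : (spt ((Pi.single i (1:ℝ)) : Fin n → ℝ) ∪ spt hh).card ≤ 2*k+1 := by
        have hsub : spt ((Pi.single i (1:ℝ)) : Fin n → ℝ) ∪ spt hh ⊆ insert i (S ∪ spt xstar) := by
          intro j hj
          rcases Finset.mem_union.mp hj with hj | hj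
          · simp only [spt, Finset.mem_filter, Finset.mem_univ, true_and] at hj
            have hje : j = i := by
              by_contra hne
              exact hj (Pi.single_eq_of_ne hne 1)
            simp [hje]
          · exact Finset.mem_insert_of_mem (hh_spt hj)
        calc (spt ((Pi.single i (1:ℝ)) : Fin n → ℝ) ∪ spt hh).card
            ≤ (insert i (S ∪ spt xstar)).card := Finset.card_le_card hsub
          _ ≤ (S ∪ spt xstar).card + 1 := Finset.card_insert_le _ _
          _ ≤ 2*k+1 := by omega
      have hinner3 := SEAux.rip_inner A hcols (2*k+1) hcard3
      have hsingle_norm : l2norm ((Pi.single i (1:ℝ)) : Fin n → ℝ) = 1 := by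
        unfold l2norm
        have h1 : ∑ j, ((Pi.single i (1:ℝ) : Fin n → ℝ) j)^2 = 1 := by
          simp [Pi.single_apply]
        rw [h1, Real.sqrt_one]
      have hterm1 : |∑ j, (Pi.single i (1:ℝ) : Fin n → ℝ) j * hh j
          - ∑ j, A.mulVec (Pi.single i (1:ℝ)) j * A.mulVec hh j| ≤ δ3 * l2norm hh := by
        rw [abs_sub_comm]
        calc |∑ j, A.mulVec (Pi.single i (1:ℝ)) j * A.mulVec hh j
              - ∑ j, (Pi.single i (1:ℝ) : Fin n → ℝ) j * hh j|
            ≤ δ3 * (l2norm ((Pi.single i (1:ℝ)) : Fin n → ℝ) * l2norm hh) := hinner3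
          _ = δ3 * l2norm hh := by rw [hsingle_norm, one_mul]
      have hterm2 : |∑ j, A.mulVec (Pi.single i (1:ℝ)) j * e j| ≤ l2norm e := by
        have h1 := SEAux.abs_dot_le (A.mulVec (Pi.single i (1:ℝ))) e
        have h2 : ∑ j, (A.mulVec (Pi.single i (1:ℝ)) j)^2 = 1 := by
          rw [Matrix.mulVec_single]
          simpa using hcols i
        rw [h2, Real.sqrt_one, one_mul] at h1
        unfold l2norm
        exact h1
      rw [hval]
      calc |(∑ j, (Pi.single i (1:ℝ) : Fin n → ℝ) j * hh j
              - ∑ j, A.mulVec (Pi.single i (1:ℝ)) j * A.mulVec hh j)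
            + ∑ j, A.mulVec (Pi.single i (1:ℝ)) j * e j|
          ≤ |∑ j, (Pi.single i (1:ℝ) : Fin n → ℝ) j * hh j
              - ∑ j, A.mulVec (Pi.single i (1:ℝ)) j * A.mulVec hh j|
            + |∑ j, A.mulVec (Pi.single i (1:ℝ)) j * e j| := abs_add_le _ _
        _ ≤ δ3 * l2norm hh + l2norm e := add_le_add hterm1 hterm2
        _ ≤ alphaRIP A k * l2norm xstar + gammaRIP A k * l2norm e := by
            rw [halpha, hgamma]
            exact SEAux.final_arith hδ20 hδ30 hc1 hs10 (SEAux.l2norm_nonneg xstar)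
              (SEAux.l2norm_nonneg e) (SEAux.l2norm_nonneg xb) (SEAux.l2norm_nonneg w)
              hnw hnh hxbx
  -- conclusion
  have hnefin : Nonempty (Fin n) := ⟨⟨0, by omega⟩⟩
  constructor
  · unfold supNorm
    exact ciSup_le fun i => claim i
  · have hgn : ∀ i, |gradNoise A y xstar η S xt i|
        ≤ η * (alphaRIP A k * l2norm xstar + gammaRIP A k * l2norm e) := by
      intro i
      have hgni : gradNoise A y xstar η S xt i
          = η * (oracleUpd xstar η S i / η - Aᵀ.mulVec (A.mulVec xt - y) i) := by
        simp only [gradNoise, Pi.sub_apply, Pi.smul_apply, smul_eq_mul]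
        field_simp
      rw [hgni, abs_mul, abs_of_pos hη]
      exact mul_le_mul_of_nonneg_left (claim i) (le_of_lt hη)
    have hsup : supNorm (gradNoise A y xstar η S xt)
        ≤ η * (alphaRIP A k * l2norm xstar + gammaRIP A k * l2norm e) := by
      unfold supNorm
      exact ciSup_le hgn
    calc (1/η) * supNorm (gradNoise A y xstar η S xt)
        ≤ (1/η) * (η * (alphaRIP A k * l2norm xstar + gammaRIP A k * l2norm e)) :=
          mul_le_mul_of_nonneg_left hsup (by positivity)
      _ = alphaRIP A k * l2norm xstar + gammaRIP A k * l2norm e := by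
          field_simp


end
end
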